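/- arXiv:2410.06868 — 16 statements merged into one kernel-verified Lean document; each statement's English description precedes it below -/
import Mathlib

section
/- Let I be a finite set, let λ : I → ℝ with λ_i > 0 for all i ∈ I, and let x : I → ℝ with x_i ≥ 0 for all i ∈ I. Suppose that for every subset S ⊆ I one has ∑_{i∈S} x_i ≤ 1 − exp(−∑_{i∈S} λ_i). Then for every convex function f : [0,1] → ℝ with f(0) = 0 and f ≥ 0, one has ∑_{i∈I} λ_i · f(x_i / λ_i) ≤ ∫_0^∞ f(e^{−λ}) dλ (where the right-hand side is allowed to be +∞). -/
/-!
Write `r i = x i / lam i` and lay the weights end to end on `[0, ∞)` in order of decreasing ratio,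
so that `i` occupies `[Λ, Λ + lam i]`, where `Λ` is the weight of the indices before it. On that
interval `f (exp (-t))` lies above the tangent line of `f` at `r i`, of some slope `g i ≥ 0`, so
`lam i * f (r i) + g i * (exp (-Λ) - exp (-(Λ + lam i)) - x i) ≤ ∫ t in Λ..Λ + lam i, f (exp (-t))`.
Summing, the correction terms form an Abel sum: the `g i` decrease along the order (subgradients
of a convex function are monotone), and the partial sums of the brackets are the slacks of the LP
constraints on the initial segments, which are nonnegative.
-/

open MeasureTheory Set Real

def HasSubgradientWithinAt (f : ℝ → ℝ) (g : ℝ) (s : Set ℝ) (x : ℝ) : Prop :=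
  ∀ y ∈ s, f x + g * (y - x) ≤ f y

lemma HasSubgradientWithinAt.le_of_lt {f : ℝ → ℝ} {s : Set ℝ} {x y g g' : ℝ}
    (hg : HasSubgradientWithinAt f g s x) (hg' : HasSubgradientWithinAt f g' s y)
    (hx : x ∈ s) (hy : y ∈ s) (hxy : x < y) : g ≤ g' := by
  have h₁ := hg y hy
  have h₂ := hg' x hx
  nlinarith

namespace ConvexOn

variable {f : ℝ → ℝ} {a b : ℝ}

lemma monotoneOn_Icc_of_le (hf : ConvexOn ℝ (Icc a b) f) (hmin : ∀ t ∈ Icc a b, f a ≤ f t) :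
    MonotoneOn f (Icc a b) := by
  intro y hy z hz hyz
  rcases hy.1.eq_or_lt with rfl | hay
  · exact hmin z hz
  · exact hf.le_right_of_left_le'' (left_mem_Icc.2 (hy.1.trans hy.2)) hz hay hyz (hmin y hy)

lemma hasSubgradientWithinAt_rightDeriv {s : Set ℝ} {x : ℝ} (hf : ConvexOn ℝ s f)
    (hx : x ∈ interior s) : HasSubgradientWithinAt f (derivWithin f (Ioi x) x) s x := by
  intro y hy
  rcases lt_trichotomy y x with hyx | rfl | hxy
  · have h := (hf.slope_le_leftDeriv_of_mem_interior hy hx hyx).trans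
      (hf.leftDeriv_le_rightDeriv_of_mem_interior hx)
    rw [slope_def_field, div_le_iff₀ (sub_pos.2 hyx)] at h
    linarith
  · simp
  · have h := hf.rightDeriv_le_slope_of_mem_interior hx hy hxy
    rw [slope_def_field, le_div_iff₀ (sub_pos.2 hxy)] at h
    linarith

lemma exists_nonneg_hasSubgradientWithinAt (hf : ConvexOn ℝ (Icc a b) f)
    (hmin : ∀ t ∈ Icc a b, f a ≤ f t) {x : ℝ} (hx : x ∈ Ico a b) :
    ∃ g, 0 ≤ g ∧ HasSubgradientWithinAt f g (Icc a b) x := by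
  rcases hx.1.eq_or_lt with rfl | hax
  · exact ⟨0, le_rfl, fun y hy => by simpa using hmin y hy⟩
  · have hx' : x ∈ interior (Icc a b) := by rw [interior_Icc]; exact ⟨hax, hx.2⟩
    refine ⟨_, ?_, hf.hasSubgradientWithinAt_rightDeriv hx'⟩
    have h := hf.hasSubgradientWithinAt_rightDeriv hx' a (left_mem_Icc.2 (hax.trans hx.2).le)
    nlinarith [hmin x (Ico_subset_Icc_self hx)]

end ConvexOn

lemma exp_neg_mem_Icc {t : ℝ} (ht : 0 ≤ t) : exp (-t) ∈ Icc (0 : ℝ) 1 :=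
  ⟨(exp_pos _).le, exp_le_one_iff.2 (neg_nonpos.2 ht)⟩

section ExpNeg

variable {f : ℝ → ℝ}

lemma MonotoneOn.intervalIntegrable_comp_exp_neg (hf : MonotoneOn f (Icc 0 1)) {a b : ℝ}
    (ha : 0 ≤ a) (hb : 0 ≤ b) : IntervalIntegrable (fun t => f (exp (-t))) volume a b := by
  have h : ∀ t ∈ uIcc a b, 0 ≤ t := fun t ht => (le_min ha hb).trans ht.1
  exact AntitoneOn.intervalIntegrable fun s hs t ht hst =>
    hf (exp_neg_mem_Icc (h t ht)) (exp_neg_mem_Icc (h s hs)) (exp_le_exp.2 (neg_le_neg hst))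

lemma mul_add_mul_le_integral_comp_exp_neg (hf : MonotoneOn f (Icc 0 1)) {r g a L : ℝ}
    (hg : HasSubgradientWithinAt f g (Icc 0 1) r) (ha : 0 ≤ a) (hL : 0 ≤ L) :
    L * f r + g * (exp (-a) - exp (-(a + L)) - L * r) ≤ ∫ t in a..a + L, f (exp (-t)) := by
  have hlow : ∀ t ∈ Icc a (a + L), f r + g * (exp (-t) - r) ≤ f (exp (-t)) :=
    fun t ht => hg _ (exp_neg_mem_Icc (ha.trans ht.1))
  have hint := intervalIntegral.integral_mono_on (by linarith)
    (Continuous.intervalIntegrable (by fun_prop) _ _)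
    (hf.intervalIntegrable_comp_exp_neg ha (by linarith)) hlow
  have hexp : ∫ t in a..a + L, exp (-t) = exp (-a) - exp (-(a + L)) := by
    simp [intervalIntegral.integral_comp_neg]
  have hline : (fun t => f r + g * (exp (-t) - r)) = fun t => (f r - g * r) + g * exp (-t) := by
    ext; ring
  rw [hline, intervalIntegral.integral_add intervalIntegrable_const
    (Continuous.intervalIntegrable (by fun_prop) _ _), intervalIntegral.integral_const_mul, hexp,
    intervalIntegral.integral_const, smul_eq_mul, add_sub_cancel_left] at hint
  linarith

end ExpNeg

theorem sum_mul_le_integral_comp_exp_neg {ι : Type*} {f : ℝ → ℝ} (hf : ConvexOn ℝ (Icc 0 1) f)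
    (hmin : ∀ t ∈ Icc (0 : ℝ) 1, f 0 ≤ f t) {lam r : ι → ℝ} (hlam : ∀ i, 0 ≤ lam i)
    (hr : ∀ i, r i ∈ Ico 0 1)
    (hLP : ∀ S : Finset ι, ∑ i ∈ S, lam i * r i ≤ 1 - exp (-∑ i ∈ S, lam i)) (S : Finset ι) :
    ∑ i ∈ S, lam i * f (r i) ≤ ∫ t in 0..∑ i ∈ S, lam i, f (exp (-t)) := by
  classical
  have hmono := hf.monotoneOn_Icc_of_le hmin
  choose! g hg₀ hg using fun x (hx : x ∈ Ico (0 : ℝ) 1) =>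
    hf.exists_nonneg_hasSubgradientWithinAt hmin hx
  have hg_mono : ∀ i j, r i ≤ r j → g (r i) ≤ g (r j) := by
    intro i j hij
    rcases hij.eq_or_lt with h | h
    · rw [h]
    · exact (hg _ (hr i)).le_of_lt (hg _ (hr j)) (Ico_subset_Icc_self (hr i))
        (Ico_subset_Icc_self (hr j)) h
  -- Abel summation, run as an induction appending indices of ever smaller ratio: the slack of the
  -- LP constraint is carried with a weight below every subgradient used so far.
  suffices H : ∀ c, (∀ j ∈ S, c ≤ g (r j)) → ∑ i ∈ S, lam i * f (r i) +
      c * (1 - exp (-∑ i ∈ S, lam i) - ∑ i ∈ S, lam i * r i) ≤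
        ∫ t in 0..∑ i ∈ S, lam i, f (exp (-t)) by
    simpa using H 0 fun j _ => hg₀ _ (hr j)
  induction S using Finset.induction_on_min_value r with
  | empty => intro c _; simp
  | insert a s has hra ih =>
    intro c hc
    have hΛ : 0 ≤ ∑ i ∈ s, lam i := Finset.sum_nonneg fun i _ => hlam i
    have hs := ih (g (r a)) fun j hj => hg_mono a j (hra j hj)
    have hpiece := mul_add_mul_le_integral_comp_exp_neg hmono (hg _ (hr a)) hΛ (hlam a)
    have hslack := mul_le_mul_of_nonneg_right (hc a (Finset.mem_insert_self a s))
      (sub_nonneg.2 (hLP (insert a s)))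
    rw [Finset.sum_insert has, Finset.sum_insert has, Finset.sum_insert has, add_comm (lam a),
      ← intervalIntegral.integral_add_adjacent_intervals
        (hmono.intervalIntegrable_comp_exp_neg le_rfl hΛ)
        (hmono.intervalIntegrable_comp_exp_neg hΛ (add_nonneg hΛ (hlam a)))] at *
    linarith

lemma ofReal_intervalIntegral_le_lintegral_Ioi {F : ℝ → ℝ} {a c : ℝ} (hac : a ≤ c)
    (hF : IntervalIntegrable F volume a c) (hF₀ : ∀ t ∈ Ioi a, 0 ≤ F t) :
    ENNReal.ofReal (∫ t in a..c, F t) ≤ ∫⁻ t in Ioi a, ENNReal.ofReal (F t) := by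
  rw [intervalIntegral.integral_of_le hac, ofReal_integral_eq_lintegral_ofReal hF.1
    (ae_restrict_of_forall_mem measurableSet_Ioc fun t ht => hF₀ t ht.1)]
  exact lintegral_mono_set Ioc_subset_Ioi_self

/-- Converse Jensen Inequality for solutions of the Natural LP:
if `∑_{i∈S} x i ≤ 1 - exp(-∑_{i∈S} λ i)` for all subsets `S`, then for every convex
nonnegative `f : [0,1] → ℝ` with `f 0 = 0`,
`∑ i, λ i * f (x i / λ i) ≤ ∫_0^∞ f (e^{-t}) dt` (right-hand side possibly `+∞`). -/
theorem converse_jensen {ι : Type*} [Fintype ι] (lam x : ι → ℝ)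
    (hlam : ∀ i, 0 < lam i) (hx : ∀ i, 0 ≤ x i)
    (hLP : ∀ S : Finset ι, ∑ i ∈ S, x i ≤ 1 - Real.exp (-(∑ i ∈ S, lam i)))
    (f : ℝ → ℝ) (hconv : ConvexOn ℝ (Set.Icc 0 1) f) (hf0 : f 0 = 0)
    (hfnonneg : ∀ t ∈ Set.Icc (0:ℝ) 1, 0 ≤ f t) :
    ENNReal.ofReal (∑ i, lam i * f (x i / lam i)) ≤
      ∫⁻ t in Set.Ioi (0:ℝ), ENNReal.ofReal (f (Real.exp (-t))) := by
  have hmin : ∀ t ∈ Icc (0 : ℝ) 1, f 0 ≤ f t := fun t ht => hf0.symm ▸ hfnonneg t ht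
  have hmul : ∀ i, lam i * (x i / lam i) = x i := fun i => mul_div_cancel₀ _ (hlam i).ne'
  have hlt : ∀ i, x i < lam i := fun i => by
    have h := hLP {i}
    rw [Finset.sum_singleton, Finset.sum_singleton] at h
    linarith [add_one_lt_exp (neg_ne_zero.2 (hlam i).ne')]
  have hr : ∀ i, x i / lam i ∈ Ico 0 1 := fun i =>
    ⟨div_nonneg (hx i) (hlam i).le, (div_lt_one (hlam i)).2 (hlt i)⟩
  have hΛ : 0 ≤ ∑ i, lam i := Finset.sum_nonneg fun i _ => (hlam i).le
  have hsum := sum_mul_le_integral_comp_exp_neg hconv hmin (fun i => (hlam i).le) hr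
    (fun S => by simpa only [hmul] using hLP S) Finset.univ
  exact (ENNReal.ofReal_le_ofReal hsum).trans <| ofReal_intervalIntegral_le_lintegral_Ioi hΛ
    ((hconv.monotoneOn_Icc_of_le hmin).intervalIntegrable_comp_exp_neg le_rfl hΛ)
    fun t ht => hfnonneg _ (exp_neg_mem_Icc (le_of_lt ht))
end

section
/- Let 0 < θ ≤ 1/2. Let I be a finite set, let λ : I → ℝ with λ_i > 0 for all i ∈ I, and let x : I → ℝ with x_i ≥ 0 for all i ∈ I, such that for every subset S ⊆ I one has ∑_{i∈S} x_i ≤ 1 − exp(−∑_{i∈S} λ_i). Then (1/θ) · ∑_{i∈I} (x_i − (1−θ)·λ_i)^+ ≤ 1 + ((1−θ)/θ)·ln(1−θ), where t^+ denotes max{t, 0}. -/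
/-!
The sum of positive parts is the sum of `x i - (1 - θ) * lam i` over the set `S` where this is
positive. The constraint for `S` bounds it by `g (∑ i ∈ S, lam i)` with
`g t = 1 - exp (-t) - (1 - θ) * t`, a concave function whose maximum `θ + (1 - θ) * log (1 - θ)`
is attained at `t = -log (1 - θ)`.
-/

open Finset Real

theorem Finset.sum_max_zero_eq_sum_filter_pos {ι : Type*} (s : Finset ι) (f : ι → ℝ) :
    ∑ i ∈ s, max (f i) 0 = ∑ i ∈ s with 0 < f i, f i := by
  rw [sum_filter]
  refine sum_congr rfl fun i _ => ?_
  split_ifs with h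
  · exact max_eq_left h.le
  · exact max_eq_right (not_lt.mp h)

theorem Real.one_sub_exp_neg_sub_mul_le {a : ℝ} (ha : 0 < a) (t : ℝ) :
    1 - exp (-t) - a * t ≤ 1 - a + a * log a := by
  -- tangent line of `exp` at `-log a`, the maximiser
  have tangent : a * (-t - log a + 1) ≤ exp (-t) := by
    calc a * (-t - log a + 1) ≤ a * exp (-t - log a) :=
          mul_le_mul_of_nonneg_left (add_one_le_exp _) ha.le
      _ = exp (-t) := by rw [exp_sub, exp_log ha, mul_div_cancel₀ _ ha.ne']
  linarith

theorem converse_jensen_theta_general {ι : Type*} [Fintype ι] (θ : ℝ)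
    (hθ0 : 0 < θ) (hθ1 : θ ≤ 1/2) (lam x : ι → ℝ)
    (hLP : ∀ S : Finset ι, ∑ i ∈ S, x i ≤ 1 - Real.exp (-(∑ i ∈ S, lam i))) :
    (1/θ) * ∑ i, max (x i - (1 - θ) * lam i) 0 ≤
      1 + ((1 - θ)/θ) * Real.log (1 - θ) := by
  set S := univ.filter fun i => 0 < x i - (1 - θ) * lam i
  have hS : ∑ i ∈ S, (x i - (1 - θ) * lam i) ≤ θ + (1 - θ) * log (1 - θ) := by
    rw [sum_sub_distrib, ← mul_sum]
    have hmax := one_sub_exp_neg_sub_mul_le (a := 1 - θ) (by linarith) (∑ i ∈ S, lam i)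
    linarith [hLP S]
  calc (1/θ) * ∑ i, max (x i - (1 - θ) * lam i) 0
      = (1/θ) * ∑ i ∈ S, (x i - (1 - θ) * lam i) := by
        rw [sum_max_zero_eq_sum_filter_pos]
    _ ≤ (1/θ) * (θ + (1 - θ) * log (1 - θ)) := by gcongr
    _ = 1 + ((1 - θ)/θ) * log (1 - θ) := by field_simp

/-- Corollary of the Converse Jensen Inequality for `f(x) = (1/θ)(x - (1-θ))⁺`:
`(1/θ) ∑ i, (x i - (1-θ) λ i)⁺ ≤ 1 + ((1-θ)/θ) ln(1-θ)`. -/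
theorem converse_jensen_theta {ι : Type*} [Fintype ι] (θ : ℝ)
    (hθ0 : 0 < θ) (hθ1 : θ ≤ 1/2) (lam x : ι → ℝ)
    (hlam : ∀ i, 0 < lam i) (hx : ∀ i, 0 ≤ x i)
    (hLP : ∀ S : Finset ι, ∑ i ∈ S, x i ≤ 1 - Real.exp (-(∑ i ∈ S, lam i))) :
    (1/θ) * ∑ i, max (x i - (1 - θ) * lam i) 0 ≤
      1 + ((1 - θ)/θ) * Real.log (1 - θ) :=
  converse_jensen_theta_general θ hθ0 hθ1 lam x hLP
end

section
/- Let q : [0,∞) → ℝ be defined by q(y) = e^{−y} for 0 ≤ y ≤ 1 and q(y) = e^{−e^{y−1}} for y > 1. Then ∫_0^∞ e^{−z}·(1 − q(z)) dz > 0.513. -/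
/-!
Splitting at `1`, the integral is `1 - ∫₀¹ e^{-2z} dz - J = (1 + e^{-2})/2 - J` with
`J = ∫₁^∞ e^{-z - e^{z-1}} dz ≈ 0.05463`, and the claim is `J < 0.05467`.
The substitution `u = e^{z-1}` turns `J` into `e^{-1} ∫₁^∞ e^{-u} u⁻² du`. If `R - R' ≥ 1/u²` on
`[1, ∞)` and `e^{-u} R(u) → 0`, then `-(e^{-u} R(u))' ≥ e^{-u} u⁻²`, so `J ≤ e^{-2} R(1)`.
A rational `R` with `R(1) = 1171/2900` works: the numerator of `R - R' - 1/u²` is a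
polynomial in `u - 1` with positive coefficients.
-/

/-- The function `q(y) = e^{-y}` for `0 ≤ y ≤ 1` and `q(y) = e^{-e^{y-1}}` for `y > 1`. -/
noncomputable def q (y : ℝ) : ℝ :=
  if y ≤ 1 then Real.exp (-y) else Real.exp (-Real.exp (y - 1))

open Real MeasureTheory Set Filter Topology

section ComparisonWithDerivative

variable {f g g' : ℝ → ℝ} {a l : ℝ}

theorem integrableOn_Ioi_of_le_neg_deriv (hderiv : ∀ x ∈ Ici a, HasDerivAt g (g' x) x)
    (hg : Tendsto g atTop (𝓝 l)) (hf_meas : AEStronglyMeasurable f (volume.restrict (Ioi a)))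
    (hf_nonneg : ∀ x ∈ Ioi a, 0 ≤ f x) (hf_le : ∀ x ∈ Ioi a, f x ≤ -g' x) :
    IntegrableOn f (Ioi a) := by
  have hg'_int : IntegrableOn g' (Ioi a) := integrableOn_Ioi_deriv_of_nonpos' hderiv
    (fun x hx => by linarith [hf_nonneg x hx, hf_le x hx]) hg
  refine hg'_int.neg.mono' hf_meas ?_
  filter_upwards [self_mem_ae_restrict measurableSet_Ioi] with x hx
  rw [Real.norm_of_nonneg (hf_nonneg x hx)]
  exact hf_le x hx

theorem setIntegral_Ioi_le_of_le_neg_deriv (hderiv : ∀ x ∈ Ici a, HasDerivAt g (g' x) x)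
    (hg : Tendsto g atTop (𝓝 l)) (hf_meas : AEStronglyMeasurable f (volume.restrict (Ioi a)))
    (hf_nonneg : ∀ x ∈ Ioi a, 0 ≤ f x) (hf_le : ∀ x ∈ Ioi a, f x ≤ -g' x) :
    ∫ x in Ioi a, f x ≤ g a - l := by
  have hg'_nonpos : ∀ x ∈ Ioi a, g' x ≤ 0 := fun x hx => by
    linarith [hf_nonneg x hx, hf_le x hx]
  calc ∫ x in Ioi a, f x ≤ ∫ x in Ioi a, -g' x :=
        setIntegral_mono_on
          (integrableOn_Ioi_of_le_neg_deriv hderiv hg hf_meas hf_nonneg hf_le)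
          (integrableOn_Ioi_deriv_of_nonpos' hderiv hg'_nonpos hg).neg measurableSet_Ioi hf_le
    _ = g a - l := by
        rw [integral_neg, integral_Ioi_of_hasDerivAt_of_nonpos' hderiv hg'_nonpos hg, neg_sub]

end ComparisonWithDerivative

lemma hasDerivAt_exp_neg_mul {R : ℝ → ℝ} {u : ℝ} (hR : DifferentiableAt ℝ R u) :
    HasDerivAt (fun u => exp (-u) * R u) (-(exp (-u) * (R u - deriv R u))) u := by
  have h : HasDerivAt (fun u => exp (-u) * R u) (exp (-u) * -1 * R u + exp (-u) * deriv R u) u :=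
    (hasDerivAt_neg u).exp.mul hR.hasDerivAt
  convert h using 1
  ring

theorem setIntegral_Ioi_exp_neg_sub_exp_le_of_sub_deriv {R : ℝ → ℝ}
    (hR_diff : ∀ u, 1 ≤ u → DifferentiableAt ℝ R u)
    (hR_sub : ∀ u, 1 ≤ u → 1 / u ^ 2 ≤ R u - deriv R u)
    (hR_lim : Tendsto (fun u => exp (-u) * R u) atTop (𝓝 0)) :
    ∫ z in Ioi 1, exp (-z - exp (z - 1)) ≤ exp (-2) * R 1 := by
  have hexp : ∀ z, HasDerivAt (fun z => exp (z - 1)) (exp (z - 1)) z := fun z => by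
    simpa using ((hasDerivAt_id z).sub_const 1).exp
  have hderiv : ∀ z ∈ Ici (1 : ℝ),
      HasDerivAt (fun z => exp (-1) * (exp (-exp (z - 1)) * R (exp (z - 1))))
        (exp (-1) * (-(exp (-exp (z - 1)) * (R (exp (z - 1)) - deriv R (exp (z - 1))))
          * exp (z - 1))) z := fun z hz =>
    ((hasDerivAt_exp_neg_mul (hR_diff (exp (z - 1)) (one_le_exp (by linarith [mem_Ici.mp hz])))).comp z
      (hexp z)).const_mul _
  have hlim : Tendsto (fun z => exp (-1) * (exp (-exp (z - 1)) * R (exp (z - 1)))) atTop (𝓝 0) := by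
    have := (hR_lim.comp (tendsto_exp_atTop.comp (tendsto_atTop_add_const_right _ (-1)
      tendsto_id))).const_mul (exp (-1))
    simpa only [mul_zero, Function.comp_def, id, ← sub_eq_add_neg] using this
  have hf_le : ∀ z ∈ Ioi (1 : ℝ), exp (-z - exp (z - 1)) ≤
      -(exp (-1) * (-(exp (-exp (z - 1)) * (R (exp (z - 1)) - deriv R (exp (z - 1))))
        * exp (z - 1))) := fun z hz => by
    set u := exp (z - 1) with hu_def
    have hu : 1 ≤ u := one_le_exp (by linarith [mem_Ioi.mp hz])
    calc exp (-z - u) = exp (-1) * exp (-u) * u * (1 / u ^ 2) := by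
          rw [hu_def, sub_eq_add_neg, exp_add, show -z = -1 - (z - 1) by ring, exp_sub]
          field_simp
      _ ≤ exp (-1) * exp (-u) * u * (R u - deriv R u) :=
          mul_le_mul_of_nonneg_left (hR_sub u hu) (by positivity)
      _ = _ := by ring
  calc ∫ z in Ioi 1, exp (-z - exp (z - 1))
      ≤ exp (-1) * (exp (-exp (1 - 1)) * R (exp (1 - 1))) - 0 :=
        setIntegral_Ioi_le_of_le_neg_deriv hderiv hlim
          (by fun_prop : Continuous fun z => exp (-z - exp (z - 1))).aestronglyMeasurable
          (fun z _ => (exp_pos _).le) hf_le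
    _ = exp (-2) * R 1 := by
        rw [show (-2 : ℝ) = -1 + -1 by norm_num, exp_add, sub_zero, sub_self, exp_zero]
        ring

/- `tailRatio` majorises `u ↦ eᵘ ∫ᵤ^∞ e^{-s} s⁻² ds` on `[1, ∞)`; the coefficients were found by
linear programming, minimising `tailRatio 1` subject to the positivity certificate. -/
noncomputable def tailNum (t : ℝ) : ℝ := 71 * t ^ 3 + 1577 * t ^ 2 + 2873 * t + 1171

noncomputable def tailDen (t : ℝ) : ℝ :=
  50 * t ^ 5 + 1900 * t ^ 4 + 9050 * t ^ 3 + 15700 * t ^ 2 + 11400 * t + 2900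

noncomputable def tailRatio (u : ℝ) : ℝ := tailNum (u - 1) / tailDen (u - 1)

lemma hasDerivAt_tailNum (t : ℝ) : HasDerivAt tailNum (213 * t ^ 2 + 3154 * t + 2873) t := by
  unfold tailNum
  exact ((((hasDerivAt_pow 3 t).const_mul 71).add ((hasDerivAt_pow 2 t).const_mul 1577)).add
    ((hasDerivAt_id' t).const_mul 2873) |>.add_const 1171).congr_deriv (by norm_num; ring)

lemma hasDerivAt_tailDen (t : ℝ) :
    HasDerivAt tailDen (250 * t ^ 4 + 7600 * t ^ 3 + 27150 * t ^ 2 + 31400 * t + 11400) t := by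
  unfold tailDen
  exact ((((((hasDerivAt_pow 5 t).const_mul 50).add ((hasDerivAt_pow 4 t).const_mul 1900)).add
    ((hasDerivAt_pow 3 t).const_mul 9050)).add ((hasDerivAt_pow 2 t).const_mul 15700)).add
    ((hasDerivAt_id' t).const_mul 11400) |>.add_const 2900).congr_deriv (by norm_num; ring)

lemma tailDen_pos {t : ℝ} (ht : 0 ≤ t) : 0 < tailDen t := by
  unfold tailDen; positivity

lemma hasDerivAt_tailRatio {t : ℝ} (ht : 0 ≤ t) :
    HasDerivAt tailRatio (((213 * t ^ 2 + 3154 * t + 2873) * tailDen t - tailNum t *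
      (250 * t ^ 4 + 7600 * t ^ 3 + 27150 * t ^ 2 + 31400 * t + 11400)) / tailDen t ^ 2) (t + 1) :=
  HasDerivAt.comp_sub_const (t + 1) 1 (by
    rw [add_sub_cancel_right]
    exact (hasDerivAt_tailNum t).div (hasDerivAt_tailDen t) (tailDen_pos ht).ne')

lemma one_div_sq_le_tailRatio_sub_deriv {u : ℝ} (hu : 1 ≤ u) :
    1 / u ^ 2 ≤ tailRatio u - deriv tailRatio u := by
  obtain ⟨t, ht, rfl⟩ : ∃ t, 0 ≤ t ∧ u = t + 1 := ⟨u - 1, by linarith, by ring⟩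
  have hB := tailDen_pos ht
  have hsub : tailRatio (t + 1) - deriv tailRatio (t + 1) = (tailNum t * tailDen t
      - (213 * t ^ 2 + 3154 * t + 2873) * tailDen t
      + tailNum t * (250 * t ^ 4 + 7600 * t ^ 3 + 27150 * t ^ 2 + 31400 * t + 11400))
      / tailDen t ^ 2 := by
    rw [(hasDerivAt_tailRatio ht).deriv, tailRatio, add_sub_cancel_right]
    field_simp
    ring
  rw [hsub, div_le_div_iff₀ (by positivity) (by positivity)]
  have hQ : 0 ≤ 3600 + 11100 * t + 14850 * t ^ 2 + 50250 * t ^ 3 + 122200 * t ^ 4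
      + 100150 * t ^ 5 + 13300 * t ^ 6 + 39750 * t ^ 7 + 84200 * t ^ 8 + 37950 * t ^ 9
      + 1050 * t ^ 10 := by positivity
  unfold tailNum tailDen
  linear_combination hQ

lemma tailRatio_nonneg {u : ℝ} (hu : 1 ≤ u) : 0 ≤ tailRatio u := by
  have ht : 0 ≤ u - 1 := by linarith
  exact div_nonneg (by unfold tailNum; positivity) (tailDen_pos ht).le

lemma tailRatio_le_one {u : ℝ} (hu : 1 ≤ u) : tailRatio u ≤ 1 := by
  have ht : 0 ≤ u - 1 := by linarith
  rw [tailRatio, div_le_one (tailDen_pos ht)]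
  unfold tailNum tailDen
  nlinarith [pow_nonneg ht 3, pow_nonneg ht 4, pow_nonneg ht 5, pow_nonneg ht 2]

lemma tendsto_exp_neg_mul_tailRatio : Tendsto (fun u => exp (-u) * tailRatio u) atTop (𝓝 0) := by
  refine squeeze_zero' ?_ ?_ tendsto_exp_neg_atTop_nhds_zero
  · filter_upwards [eventually_ge_atTop 1] with u hu
    exact mul_nonneg (exp_pos _).le (tailRatio_nonneg hu)
  · filter_upwards [eventually_ge_atTop 1] with u hu
    exact mul_le_of_le_one_right (exp_pos _).le (tailRatio_le_one hu)

lemma setIntegral_Ioi_exp_neg_sub_exp_le :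
    ∫ z in Ioi 1, exp (-z - exp (z - 1)) ≤ exp (-2) * (1171 / 2900) := by
  have hR1 : tailRatio 1 = 1171 / 2900 := by norm_num [tailRatio, tailNum, tailDen]
  rw [← hR1]
  refine setIntegral_Ioi_exp_neg_sub_exp_le_of_sub_deriv (fun u hu => ?_)
    (fun u hu => one_div_sq_le_tailRatio_sub_deriv hu) tendsto_exp_neg_mul_tailRatio
  obtain ⟨t, ht, rfl⟩ : ∃ t, 0 ≤ t ∧ u = t + 1 := ⟨u - 1, by linarith, by ring⟩
  exact (hasDerivAt_tailRatio ht).differentiableAt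

lemma exp_neg_mul_q_of_le_one {z : ℝ} (hz : z ≤ 1) : exp (-z) * q z = exp (-(2 * z)) := by
  rw [q, if_pos hz, ← exp_add]
  ring_nf

lemma exp_neg_mul_q_of_one_lt {z : ℝ} (hz : 1 < z) :
    exp (-z) * q z = exp (-z - exp (z - 1)) := by
  rw [q, if_neg hz.not_ge, ← exp_add]
  ring_nf

lemma integrableOn_exp_neg_sub_exp : IntegrableOn (fun z => exp (-z - exp (z - 1))) (Ioi 1) := by
  refine (exp_neg_integrableOn_Ioi 1 one_pos).mono' (by fun_prop : Continuous _).aestronglyMeasurable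
    (Eventually.of_forall fun z => ?_)
  rw [Real.norm_of_nonneg (exp_pos _).le, neg_one_mul]
  exact exp_le_exp.mpr (by linarith [exp_pos (z - 1)])

lemma integral_Ioc_exp_neg_two_mul : ∫ z in Ioc 0 1, exp (-(2 * z)) = (1 - exp (-2)) / 2 := by
  rw [← intervalIntegral.integral_of_le zero_le_one]
  have := intervalIntegral.integral_comp_mul_left (a := 0) (b := 1) exp (by norm_num : (-2 : ℝ) ≠ 0)
  simp only [neg_mul] at this
  rw [this, integral_exp]
  norm_num
  ring

lemma integrableOn_exp_neg_mul_q : IntegrableOn (fun z => exp (-z) * q z) (Ioi 0) := by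
  rw [← Ioc_union_Ioi_eq_Ioi zero_le_one]
  refine IntegrableOn.union ?_ ?_
  · refine (Continuous.integrableOn_Ioc (by fun_prop : Continuous fun z => exp (-(2 * z)))).congr_fun
      (fun z hz => (exp_neg_mul_q_of_le_one hz.2).symm) measurableSet_Ioc
  · exact integrableOn_exp_neg_sub_exp.congr_fun
      (fun z hz => (exp_neg_mul_q_of_one_lt hz).symm) measurableSet_Ioi

lemma integral_exp_neg_mul_q :
    ∫ z in Ioi 0, exp (-z) * q z = (1 - exp (-2)) / 2 + ∫ z in Ioi 1, exp (-z - exp (z - 1)) := by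
  rw [← Ioc_union_Ioi_eq_Ioi zero_le_one, setIntegral_union Ioc_disjoint_Ioi_same measurableSet_Ioi
    (integrableOn_exp_neg_mul_q.mono_set Ioc_subset_Ioi_self)
    (integrableOn_exp_neg_mul_q.mono_set (Ioi_subset_Ioi zero_le_one)),
    setIntegral_congr_fun measurableSet_Ioc (fun z hz => exp_neg_mul_q_of_le_one hz.2),
    setIntegral_congr_fun measurableSet_Ioi (fun z hz => exp_neg_mul_q_of_one_lt hz),
    integral_Ioc_exp_neg_two_mul]

lemma exp_neg_two_gt : 0.1352 < exp (-2) := by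
  have h2 : exp 2 < 7.3964 := by
    rw [show (2 : ℝ) = 1 + 1 by norm_num, exp_add]
    nlinarith [exp_one_lt_d9, exp_pos 1]
  rw [exp_neg, lt_inv_comm₀ (by norm_num) (exp_pos 2)]
  linarith

/-- The competitive ratio of Balance SWOR: `∫_0^∞ e^{-z}(1 - q(z)) dz > 0.513`. -/
theorem balance_swor_ratio :
    (0.513 : ℝ) < ∫ z in Set.Ioi (0:ℝ), Real.exp (-z) * (1 - q z) := by
  have hsplit : ∫ z in Ioi 0, exp (-z) * (1 - q z) = 1 - ∫ z in Ioi 0, exp (-z) * q z := by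
    simp_rw [mul_sub, mul_one]
    have hexp : IntegrableOn (fun z => exp (-z)) (Ioi 0) := by
      simpa using exp_neg_integrableOn_Ioi 0 one_pos
    rw [integral_sub hexp integrableOn_exp_neg_mul_q, integral_exp_neg_Ioi_zero]
  rw [hsplit, integral_exp_neg_mul_q]
  linarith [setIntegral_Ioi_exp_neg_sub_exp_le, exp_neg_two_gt]
end

section
/- Let q : [0,∞) → ℝ be defined by q(y) = e^{−y} for 0 ≤ y ≤ 1 and q(y) = e^{−e^{y−1}} for y > 1. For every 0 ≤ z ≤ 1 and every y ≥ 0: if y ≤ 1 then (z·q((y−z)^+)) / (1 − z + z·q((y−z)^+)) ≤ exp(−(1−z)), and if y > 1 then (z·q((y−z)^+)) / (1 − z + z·q((y−z)^+)) ≤ exp(−(1−z)·e^{y−1}); here t^+ denotes max{t, 0}. -/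
open Real

lemma div_le_exp_neg_of_mul_exp_sub_one_le {z Q W : ℝ} (hz0 : 0 ≤ z) (hz1 : z ≤ 1) (hQ : 0 < Q)
    (h : z * Q * (exp W - 1) ≤ 1 - z) : z * Q / (1 - z + z * Q) ≤ exp (-W) := by
  have hD : 0 < 1 - z + z * Q := by
    rcases hz1.lt_or_eq with hz1 | rfl
    · nlinarith [mul_nonneg hz0 hQ.le]
    · simpa using hQ
  rw [div_le_iff₀ hD, exp_neg, inv_mul_eq_div, le_div_iff₀ (exp_pos W)]
  linarith

lemma two_sub_mul_exp_le {g : ℝ} (hg : 0 ≤ g) : (2 - g) * exp g ≤ 2 + g := by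
  rcases lt_or_ge g 2 with hg2 | hg2
  · have := exp_le_two_add_div_two_sub hg hg2
    rwa [le_div_iff₀ (by linarith), mul_comm] at this
  · nlinarith [exp_pos g]

lemma one_sub_add_sub_le_exp_neg {x : ℝ} (hx0 : 0 ≤ x) (hx1 : x ≤ 1) :
    1 - x + x ^ 2 / 2 - x ^ 3 / 6 ≤ exp (-x) := by
  have hub := exp_bound' hx0 hx1 (n := 4) (by norm_num)
  simp only [Finset.sum_range_succ, Finset.sum_range_zero, Nat.factorial] at hub
  norm_num at hub
  have hp : 0 < 1 - x + x ^ 2 / 2 - x ^ 3 / 6 := by nlinarith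
  rw [exp_neg, le_inv_comm₀ hp (exp_pos x), inv_eq_one_div, le_div_iff₀ hp]
  nlinarith [pow_nonneg hx0 4, pow_nonneg hx0 5, pow_nonneg hx0 6, pow_nonneg hx0 7,
      mul_nonneg (pow_nonneg hx0 4) (sub_nonneg.mpr hx1)]

lemma exp_mul_sub_one_le {a : ℝ} (ha0 : 0 ≤ a) (ha1 : a ≤ 1) (t : ℝ) :
    exp (a * t) - 1 ≤ a * (exp t - 1) := by
  have := convexOn_exp.2 (Set.mem_univ 0) (Set.mem_univ t) (sub_nonneg.2 ha1) ha0 (by ring)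
  simp only [smul_eq_mul, mul_zero, zero_add, exp_zero, mul_one] at this
  linarith

lemma two_mul_mul_le_of_le_0725 {z c : ℝ} (hz0 : 0 ≤ z) (hz : z ≤ 0.725) (hc : 0 ≤ c) :
    2 * z * c ≤ (2 + (1 - z) * c) *
      (1 + c * (z ^ 2 / 2 - z ^ 3 / 6) + (c * (z ^ 2 / 2 - z ^ 3 / 6)) ^ 2 / 2) := by
  set p := z ^ 2 / 2 - z ^ 3 / 6 with hp
  have hp0 : 0 ≤ p := by nlinarith
  have hw0 : 0 ≤ 1 - z := by linarith
  have hcube : 0 ≤ (1 - z) * c ^ 3 * p ^ 2 := by positivity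
  have hquad : (3 * z - 1 - 2 * p) * c ≤ 2 + (p ^ 2 + (1 - z) * p) * c ^ 2 := by
    rcases le_or_gt (3 * z - 1 - 2 * p) 0 with hm | hm
    · nlinarith [mul_nonneg (sq_nonneg c) (add_nonneg (sq_nonneg p) (mul_nonneg hw0 hp0))]
    · have hdisc : (3 * z - 1 - 2 * p) ^ 2 ≤ 8 * (p ^ 2 + (1 - z) * p) := by
        rw [hp]
        nlinarith [sq_nonneg z, sq_nonneg (z - 0.5), sq_nonneg (z - 0.725), mul_nonneg hz0 hz0,
          mul_nonneg (mul_nonneg hz0 hz0) hz0, pow_nonneg hz0 4, pow_nonneg hz0 5,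
          pow_nonneg hz0 6, mul_nonneg hz0 (sub_nonneg.2 hz),
          mul_nonneg (mul_nonneg hz0 hz0) (sub_nonneg.2 hz),
          mul_nonneg (mul_nonneg (mul_nonneg hz0 hz0) hz0) (sub_nonneg.2 hz),
          mul_nonneg (pow_nonneg hz0 4) (sub_nonneg.2 hz),
          mul_nonneg (pow_nonneg hz0 5) (sub_nonneg.2 hz)]
      have hb : 0 < p ^ 2 + (1 - z) * p := by nlinarith
      nlinarith [sq_nonneg (2 * (p ^ 2 + (1 - z) * p) * c - (3 * z - 1 - 2 * p))]
  nlinarith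

lemma two_mul_le_of_0725_le {z : ℝ} (hz : 0.725 ≤ z) (hz1 : z ≤ 1) :
    2 * z ≤ (2 + (1 - z) * exp z) * (exp 1 * (exp (-z) - 1 + z)) := by
  obtain ⟨w, rfl⟩ : ∃ w, z = 1 - w := ⟨1 - z, by ring⟩
  have hw0 : 0 ≤ w := by linarith
  have hw : w ≤ 0.275 := by linarith
  have hF : exp 1 * (exp (-(1 - w)) - 1 + (1 - w)) = exp w - exp 1 * w := by
    rw [mul_add, mul_sub, ← exp_add]
    ring_nf
  rw [hF, sub_sub_cancel]
  have hexpw : 1 + w + w ^ 2 / 2 + w ^ 3 / 6 ≤ exp w := by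
    have h := sum_le_exp_of_nonneg hw0 4
    simp only [Finset.sum_range_succ, Finset.sum_range_zero, Nat.factorial] at h
    norm_num at h
    linarith
  have hexpz : 2.7182818283 * (1 - w + w ^ 2 / 2 - w ^ 3 / 6) ≤ exp (1 - w) := by
    rw [sub_eq_add_neg (1 : ℝ) w, exp_add]
    exact mul_le_mul exp_one_gt_d9.le (one_sub_add_sub_le_exp_neg hw0 (by linarith))
      (by nlinarith) (exp_pos 1).le
  have he : exp 1 * w ≤ 2.7182818286 * w := mul_le_mul_of_nonneg_right exp_one_lt_d9.le hw0
  have hpoly : 2 * (1 - w) ≤ (2 + 2.7182818283 * w * (1 - w + w ^ 2 / 2 - w ^ 3 / 6)) *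
      (1 + w + w ^ 2 / 2 + w ^ 3 / 6 - 2.7182818286 * w) := by
    nlinarith [sq_nonneg w, mul_nonneg hw0 hw0, pow_nonneg hw0 3, pow_nonneg hw0 4,
      pow_nonneg hw0 5, pow_nonneg hw0 6, pow_nonneg hw0 7,
      mul_nonneg hw0 (sub_nonneg.2 hw),
      mul_nonneg (mul_nonneg hw0 hw0) (sub_nonneg.2 hw),
      mul_nonneg (pow_nonneg hw0 3) (sub_nonneg.2 hw),
      mul_nonneg (pow_nonneg hw0 4) (sub_nonneg.2 hw),
      mul_nonneg (pow_nonneg hw0 5) (sub_nonneg.2 hw),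
      mul_nonneg (pow_nonneg hw0 6) (sub_nonneg.2 hw),
      sq_nonneg (w - 0.275), sq_nonneg (w - 0.1)]
  refine hpoly.trans (mul_le_mul ?_ ?_ ?_ ?_)
  · nlinarith
  · linarith
  · nlinarith
  · nlinarith [exp_pos (1 - w)]

lemma two_mul_mul_exp_neg_le {z c : ℝ} (hz0 : 0 ≤ z) (hz1 : z ≤ 1) (hc : exp z ≤ c) :
    2 * z * c * exp (-(c * (exp (-z) - 1 + z))) ≤ 2 + (1 - z) * c := by
  have hc0 : 0 < c := (exp_pos z).trans_le hc
  have hF : z ^ 2 / 2 - z ^ 3 / 6 ≤ exp (-z) - 1 + z := by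
    linarith [one_sub_add_sub_le_exp_neg hz0 hz1]
  set F := exp (-z) - 1 + z
  have hinv : exp (c * F) * exp (-(c * F)) = 1 := by rw [← exp_add, add_neg_cancel, exp_zero]
  rcases le_or_gt z 0.725 with hz | hz
  · have hcF := quadratic_le_exp_of_nonneg (mul_nonneg hc0.le (hF.trans' (by nlinarith)))
    have hmono : 2 * z * c ≤ (2 + (1 - z) * c) * exp (c * F) := by
      refine (two_mul_mul_le_of_le_0725 hz0 hz hc0.le).trans (mul_le_mul_of_nonneg_left ?_ ?_)
      · refine le_trans ?_ hcF
        have : c * (z ^ 2 / 2 - z ^ 3 / 6) ≤ c * F := mul_le_mul_of_nonneg_left hF hc0.le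
        nlinarith [mul_nonneg hc0.le (show 0 ≤ z ^ 2 / 2 - z ^ 3 / 6 by nlinarith)]
      · nlinarith
    calc 2 * z * c * exp (-(c * F)) ≤ (2 + (1 - z) * c) * exp (c * F) * exp (-(c * F)) :=
          mul_le_mul_of_nonneg_right hmono (exp_pos _).le
      _ = 2 + (1 - z) * c := by rw [mul_assoc, hinv, mul_one]
  · have hF0 : 0 < F := by linarith [add_one_lt_exp (neg_ne_zero.2 (by linarith : z ≠ 0))]
    have hmax : exp 1 * (c * F * exp (-(c * F))) ≤ 1 := by
      have := mul_le_mul_of_nonneg_left (mul_exp_neg_le_exp_neg_one (c * F)) (exp_pos 1).le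
      rwa [← exp_add, add_neg_cancel, exp_zero] at this
    refine le_of_mul_le_mul_right ?_ (mul_pos (exp_pos 1) hF0)
    calc 2 * z * c * exp (-(c * F)) * (exp 1 * F)
          = 2 * z * (exp 1 * (c * F * exp (-(c * F)))) := by ring
      _ ≤ 2 * z := by nlinarith
      _ ≤ (2 + (1 - z) * exp z) * (exp 1 * F) := two_mul_le_of_0725_le hz.le hz1
      _ ≤ (2 + (1 - z) * c) * (exp 1 * F) := by gcongr

lemma mul_exp_neg_mul_exp_sub_one_le {z c : ℝ} (hz0 : 0 ≤ z) (hz1 : z ≤ 1) (hc : exp z ≤ c) :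
    z * exp (-(c * exp (-z))) * (exp ((1 - z) * c) - 1) ≤ 1 - z := by
  have hg : 0 ≤ (1 - z) * c := mul_nonneg (by linarith) ((exp_pos z).le.trans hc)
  have hpade := two_sub_mul_exp_le hg
  have hexp : exp (-(c * exp (-z))) * exp ((1 - z) * c) = exp (-(c * (exp (-z) - 1 + z))) := by
    rw [← exp_add]
    ring_nf
  refine le_of_mul_le_mul_right ?_ (by positivity : 0 < 2 + (1 - z) * c)
  calc z * exp (-(c * exp (-z))) * (exp ((1 - z) * c) - 1) * (2 + (1 - z) * c)
      ≤ z * exp (-(c * exp (-z))) * (2 * ((1 - z) * c) * exp ((1 - z) * c)) := by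
        rw [mul_assoc _ (exp ((1 - z) * c) - 1)]
        refine mul_le_mul_of_nonneg_left ?_ (mul_nonneg hz0 (exp_pos _).le)
        linear_combination hpade
    _ = (1 - z) * (2 * z * c * (exp (-(c * exp (-z))) * exp ((1 - z) * c))) := by ring
    _ ≤ (1 - z) * (2 + (1 - z) * c) := by
        rw [hexp]
        exact mul_le_mul_of_nonneg_left (two_mul_mul_exp_neg_le hz0 hz1 hc) (by linarith)

lemma mul_exp_sub_one_div_mul_exp_sub_one_le {z c : ℝ} (hz0 : 0 ≤ z) (hz1 : z ≤ 1) (hc0 : 0 < c)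
    (hc : c ≤ exp z) : z * (exp (z - 1) / c) * (exp ((1 - z) * c) - 1) ≤ 1 - z := by
  have hboundary := mul_exp_neg_mul_exp_sub_one_le hz0 hz1 le_rfl
  rw [← exp_add, add_neg_cancel, exp_zero] at hboundary
  have hconv := exp_mul_sub_one_le (div_nonneg hc0.le (exp_pos z).le)
    ((div_le_one (exp_pos z)).2 hc) ((1 - z) * exp z)
  rw [show c / exp z * ((1 - z) * exp z) = (1 - z) * c by field_simp] at hconv
  calc z * (exp (z - 1) / c) * (exp ((1 - z) * c) - 1)
      ≤ z * (exp (z - 1) / c) * (c / exp z * (exp ((1 - z) * exp z) - 1)) := by gcongr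
    _ = z * exp (-1) * (exp ((1 - z) * exp z) - 1) := by
        rw [exp_sub, show -(1 : ℝ) = 0 - 1 by norm_num, exp_sub, exp_zero]
        field_simp
    _ ≤ 1 - z := by simpa using hboundary

lemma mul_mul_exp_one_sub_sub_one_le {z Q : ℝ} (hz0 : 0 ≤ z) (hz1 : z ≤ 1) (hQ1 : Q ≤ 1) :
    z * Q * (exp (1 - z) - 1) ≤ 1 - z := by
  have hz : z * exp (1 - z) ≤ 1 := by
    have := mul_le_mul_of_nonneg_left (mul_exp_neg_le_exp_neg_one z) (exp_pos 1).le
    rw [← exp_add, add_neg_cancel, exp_zero, mul_left_comm, ← exp_add, ← sub_eq_add_neg] at this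
    exact this
  have he : 1 ≤ exp (1 - z) := one_le_exp (by linarith)
  nlinarith [mul_le_mul_of_nonneg_right (mul_le_mul_of_nonneg_left hQ1 hz0) (sub_nonneg.2 he)]

theorem balance_swor_condition_general (z y : ℝ) (hz0 : 0 ≤ z) (hz1 : z ≤ 1) :
    (y ≤ 1 →
      z * q (max (y - z) 0) / (1 - z + z * q (max (y - z) 0)) ≤ Real.exp (-(1 - z))) ∧
    (1 < y →
      z * q (max (y - z) 0) / (1 - z + z * q (max (y - z) 0)) ≤
        Real.exp (-(1 - z) * Real.exp (y - 1))) := by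
  refine ⟨fun hy => ?_, fun hy => ?_⟩
  · rw [q, if_pos (max_le (by linarith) zero_le_one)]
    refine div_le_exp_neg_of_mul_exp_sub_one_le hz0 hz1 (exp_pos _)
      (mul_mul_exp_one_sub_sub_one_le hz0 hz1 ?_)
    exact exp_le_one_iff.2 (neg_nonpos.2 (le_max_right _ _))
  · rw [max_eq_left (by linarith), neg_mul]
    rcases le_or_gt (y - z) 1 with hyz | hyz
    · have hQ : q (y - z) = exp (z - 1) / exp (y - 1) := by
        rw [q, if_pos hyz, ← exp_sub]
        ring_nf
      rw [hQ]
      exact div_le_exp_neg_of_mul_exp_sub_one_le hz0 hz1 (by positivity)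
        (mul_exp_sub_one_div_mul_exp_sub_one_le hz0 hz1 (by positivity)
          (exp_le_exp.2 (by linarith)))
    · have hQ : q (y - z) = exp (-(exp (y - 1) * exp (-z))) := by
        rw [q, if_neg hyz.not_ge, ← exp_add]
        ring_nf
      rw [hQ]
      exact div_le_exp_neg_of_mul_exp_sub_one_le hz0 hz1 (exp_pos _)
        (mul_exp_neg_mul_exp_sub_one_le hz0 hz1 (exp_le_exp.2 (by linarith)))

/-- Key analytic lemma for Balance SWOR: for `0 ≤ z ≤ 1` and `y ≥ 0`,
`z q((y-z)⁺) / (1 - z + z q((y-z)⁺)) ≤ exp((1-z) q'(y)/q(y))`, where the right-hand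
side is `exp(-(1-z))` for `y ≤ 1` and `exp(-(1-z) e^{y-1})` for `y > 1`. -/
theorem balance_swor_condition (z y : ℝ) (hz0 : 0 ≤ z) (hz1 : z ≤ 1) (hy : 0 ≤ y) :
    (y ≤ 1 →
      z * q (max (y - z) 0) / (1 - z + z * q (max (y - z) 0)) ≤ Real.exp (-(1 - z))) ∧
    (1 < y →
      z * q (max (y - z) 0) / (1 - z + z * q (max (y - z) 0)) ≤
        Real.exp (-(1 - z) * Real.exp (y - 1))) :=
  balance_swor_condition_general z y hz0 hz1
end

section
/- For all real numbers y, z with 0 ≤ z < 1, 0 ≤ y, and y + z ≤ 1: exp(z·e^{y}) ≤ 1 + (z/(1−z))·e^{y+z}. -/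
/-!
Put `a = z e^y`, so the right-hand side is `1 + a e^z / (1 - z)`. The constraint `y + z ≤ 1` gives
`a ≤ 1` and `a ≤ e z`. On `[0, 1]` the exponential is at most `1 + a + (13/18) a²`, and
`(13/18) e < 2`, so `exp a - 1 ≤ a (1 + 2z)`. Finally `(1 + 2z)(1 - z) ≤ 1 + z ≤ e^z`.
-/

open Real

lemma mul_exp_le_one_of_add_le_one {y z : ℝ} (hyz : y + z ≤ 1) :
    z * exp y ≤ 1 :=
  calc z * exp y ≤ exp (z - 1) * exp (1 - z) := by
        gcongr
        · linarith [add_one_le_exp (z - 1)]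
        · linarith
    _ = 1 := by rw [← exp_add]; norm_num

lemma exp_le_one_add_add_mul_sq {a : ℝ} (ha0 : 0 ≤ a) (ha1 : a ≤ 1) :
    exp a ≤ 1 + a + 13 / 18 * a ^ 2 := by
  have hcubic : exp a ≤ 1 + a + a ^ 2 / 2 + 2 / 9 * a ^ 3 := by
    have h := exp_bound' ha0 ha1 (n := 3) (by norm_num)
    norm_num [Finset.sum_range_succ, Nat.factorial] at h
    linarith
  have hcube : a ^ 3 ≤ a ^ 2 := pow_le_pow_of_le_one ha0 ha1 (by norm_num)
  linarith

lemma one_add_two_mul_mul_one_sub_le_exp (z : ℝ) :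
    (1 + 2 * z) * (1 - z) ≤ exp z := by
  nlinarith [add_one_le_exp z, sq_nonneg z]

theorem subcase1_general (y z : ℝ) (hz0 : 0 ≤ z) (hz1 : z < 1) (hyz : y + z ≤ 1) :
    Real.exp (z * Real.exp y) ≤ 1 + (z / (1 - z)) * Real.exp (y + z) := by
  set a := z * exp y with ha
  have ha0 : 0 ≤ a := by positivity
  have ha_le_ez : a ≤ exp 1 * z := by
    rw [ha, mul_comm (exp 1)]
    gcongr
    linarith
  have hquad : 13 / 18 * a ≤ 2 * z := by
    nlinarith [exp_one_lt_d9]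
  have hrhs : z / (1 - z) * exp (y + z) = a * exp z / (1 - z) := by
    rw [exp_add]; ring
  have hgap : a * (1 + 2 * z) ≤ a * exp z / (1 - z) := by
    rw [le_div_iff₀ (by linarith), mul_assoc]
    gcongr
    exact one_add_two_mul_mul_one_sub_le_exp z
  calc exp a ≤ 1 + a + 13 / 18 * a ^ 2 :=
        exp_le_one_add_add_mul_sq ha0 (mul_exp_le_one_of_add_le_one hyz)
    _ ≤ 1 + a * (1 + 2 * z) := by nlinarith
    _ ≤ 1 + z / (1 - z) * exp (y + z) := by linarith

/-- Subcase 1 inequality: for `0 ≤ z < 1`, `0 ≤ y`, `y + z ≤ 1`: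
`exp(z e^y) ≤ 1 + (z/(1-z)) e^{y+z}`. -/
theorem subcase1 (y z : ℝ) (hz0 : 0 ≤ z) (hz1 : z < 1) (hy : 0 ≤ y) (hyz : y + z ≤ 1) :
    Real.exp (z * Real.exp y) ≤ 1 + (z / (1 - z)) * Real.exp (y + z) :=
  subcase1_general y z hz0 hz1 hyz
end

section
/- For every real number z with 0 ≤ z < 1: exp(z·e^{1−z}) ≤ 1 + e·z/(1−z). -/
/-!
Taking logarithms, it suffices that `z e^{1-z} ≤ log (1 + x)` with `x = e z / (1 - z)`.
The elementary bounds `e^{-z} ≤ 1 / (1 + z)` and `2 x / (x + 2) ≤ log (1 + x)` reduce this to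
`e z / (1 + z) ≤ 2 e z / (2 + (e - 2) z)`, which holds because `e ≤ 4`.
-/

open Real

lemma mul_exp_neg_le_div_one_add {z : ℝ} (hz : 0 ≤ z) : z * exp (-z) ≤ z / (1 + z) := by
  rw [exp_neg, ← div_eq_mul_inv]
  exact div_le_div_of_nonneg_left hz (by linarith) (by linarith [add_one_le_exp z])

lemma exp_le_one_add_of_le_two_mul_div {x y : ℝ} (hx : 0 ≤ x) (h : y ≤ 2 * x / (x + 2)) :
    exp y ≤ 1 + x :=
  (le_log_iff_exp_le (by linarith)).1 (h.trans (le_log_one_add_of_nonneg hx))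

theorem exp_mul_mul_exp_neg_le_one_add {a z : ℝ} (ha0 : 0 ≤ a) (ha4 : a ≤ 4) (hz0 : 0 ≤ z)
    (hz1 : z < 1) : exp (a * (z * exp (-z))) ≤ 1 + a * z / (1 - z) := by
  have h1z : 0 < 1 - z := by linarith
  apply exp_le_one_add_of_le_two_mul_div (by positivity)
  calc a * (z * exp (-z)) ≤ a * (z / (1 + z)) :=
        mul_le_mul_of_nonneg_left (mul_exp_neg_le_div_one_add hz0) ha0
    _ ≤ 2 * (a * z / (1 - z)) / (a * z / (1 - z) + 2) := by
        rw [div_add' _ _ _ h1z.ne', mul_div_assoc' 2, div_div_div_cancel_right₀ h1z.ne',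
          mul_div_assoc', div_le_div_iff₀ (by linarith) (by positivity)]
        -- after cross-multiplying, the gap is `a z² (4 - a)`
        nlinarith [mul_nonneg (mul_nonneg ha0 (mul_nonneg hz0 hz0)) (sub_nonneg.2 ha4)]

/-- For `0 ≤ z < 1`: `exp(z e^{1-z}) ≤ 1 + e z/(1-z)`. -/
theorem swor_ineq (z : ℝ) (hz0 : 0 ≤ z) (hz1 : z < 1) :
    Real.exp (z * Real.exp (1 - z)) ≤ 1 + Real.exp 1 * z / (1 - z) := by
  have he4 : exp 1 ≤ 4 := by linarith [exp_one_lt_d9]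
  convert exp_mul_mul_exp_neg_le_one_add (exp_pos 1).le he4 hz0 hz1 using 2
  rw [sub_eq_add_neg, exp_add]
  ring
end

section
/- For all real numbers y, z with 0 ≤ z < 1, y > 0, and y + z > 1: exp(z·e^{y}) ≤ 1 + (z/(1−z))·exp(e^{y+z−1}). -/
/-!
With `E = exp (y + z - 1)` the exponent `z * exp y` equals `z * exp (1 - z) * E`, and the claim
becomes `(1 - z) * (exp (z * exp (1 - z) * E) - 1) ≤ z * exp E`, which holds for every `E ≥ 0`:
the difference of the two sides, as a function of `z`, vanishes at `0` and is nondecreasing on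
`[0, 1]`. In its derivative, splitting `exp E = exp (a * E) * exp ((1 - a) * E)` with
`a = z * exp (1 - z)` and using `exp x ≥ e * x` reduces everything to the polynomial bound
`1 + (e - 2) * z + z ^ 2 ≤ exp z` on `[0, 1]`. That bound is tight at both ends and follows from
cubic Taylor bounds of `exp` around `0` and around `1`.
-/

open Real

namespace Real

lemma cubic_le_exp_of_nonpos {x : ℝ} (h1 : -1 ≤ x) (h0 : x ≤ 0) :
    1 + x + x ^ 2 / 2 + x ^ 3 / 6 ≤ exp x := by
  obtain ⟨w, rfl⟩ : ∃ w, x = -w := ⟨-x, by ring⟩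
  have hw0 : 0 ≤ w := by linarith
  have hexp : exp w ≤ 1 + w + w ^ 2 / 2 + w ^ 3 / 6 + w ^ 4 * 5 / 96 := by
    have h := exp_bound' hw0 (by linarith) (n := 4) (by norm_num)
    norm_num [Finset.sum_range_succ, Nat.factorial] at h
    linarith
  have hp : 0 ≤ 1 - w + w ^ 2 / 2 - w ^ 3 / 6 := by nlinarith
  rw [exp_neg, ← one_div, le_div_iff₀ (exp_pos w)]
  -- `(1 - w + w²/2 - w³/6) * (1 + w + w²/2 + w³/6) = 1 - w⁴/12 - w⁶/36`
  nlinarith [mul_le_mul_of_nonneg_left hexp hp, pow_nonneg hw0 4, pow_nonneg hw0 5,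
    pow_nonneg hw0 6, pow_nonneg hw0 7]

lemma one_add_mul_add_sq_le_exp {v : ℝ} (h0 : 0 ≤ v) (h1 : v ≤ 1) :
    1 + (exp 1 - 2) * v + v ^ 2 ≤ exp v := by
  have he_gt := exp_one_gt_d9
  have he_lt := exp_one_lt_d9
  rcases le_or_gt v (1 / 2) with hv | hv
  · have h := sum_le_exp_of_nonneg h0 4
    norm_num [Finset.sum_range_succ, Nat.factorial] at h
    nlinarith [pow_nonneg h0 3]
  · have h := cubic_le_exp_of_nonpos (x := v - 1) (by linarith) (by linarith)
    have hsplit : exp v = exp 1 * exp (v - 1) := by rw [← exp_add]; ring_nf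
    rw [hsplit]
    nlinarith [mul_le_mul_of_nonneg_left h (exp_pos 1).le,
      mul_nonneg (sq_nonneg (1 - v)) (by linarith : (0 : ℝ) ≤ v - 1 / 2)]

lemma sq_mul_exp_le_exp_one_mul {t : ℝ} (h0 : 0 ≤ t) (h1 : t ≤ 1) :
    (1 - t) ^ 2 * exp (1 - t) ≤ exp 1 * (1 - t * exp (1 - t)) := by
  have h := mul_le_mul_of_nonneg_right (one_add_mul_add_sq_le_exp h0 h1) (exp_pos (1 - t)).le
  have hsplit : exp 1 = exp t * exp (1 - t) := by rw [← exp_add]; ring_nf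
  nlinarith

lemma sq_mul_exp_mul_exp_le_exp {E t : ℝ} (hE : 0 ≤ E) (h0 : 0 ≤ t) (h1 : t ≤ 1) :
    (1 - t) ^ 2 * exp (1 - t) * E * exp (t * exp (1 - t) * E) ≤ exp E := by
  set a := t * exp (1 - t)
  have hsplit : exp E = exp (a * E) * exp ((1 - a) * E) := by rw [← exp_add]; ring_nf
  have hbound : (1 - t) ^ 2 * exp (1 - t) * E ≤ exp ((1 - a) * E) :=
    calc (1 - t) ^ 2 * exp (1 - t) * E ≤ exp 1 * ((1 - a) * E) := by
          rw [← mul_assoc]; exact mul_le_mul_of_nonneg_right (sq_mul_exp_le_exp_one_mul h0 h1) hE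
      _ ≤ exp ((1 - a) * E) := exp_one_mul_le_exp
  rw [hsplit, mul_comm (exp (a * E))]
  exact mul_le_mul_of_nonneg_right hbound (exp_pos _).le

end Real

namespace BalanceSWOR

/-- At `E = exp (y + z - 1)` the exponent `z * exp (1 - z) * E` is `z * exp y`, so `gap E z ≥ 0`
is the inequality of Subcase 2 multiplied by `1 - z`. -/
noncomputable def gap (E t : ℝ) : ℝ :=
  t * exp E - (1 - t) * (exp (t * exp (1 - t) * E) - 1)

lemma hasDerivAt_gap (E t : ℝ) :
    HasDerivAt (gap E)
      (exp E + (exp (t * exp (1 - t) * E) - 1)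
        - (1 - t) ^ 2 * exp (1 - t) * E * exp (t * exp (1 - t) * E)) t := by
  have hlin : HasDerivAt (fun s : ℝ ↦ 1 - s) (-1) t := by
    simpa using (hasDerivAt_id t).const_sub 1
  have hexponent : HasDerivAt (fun s ↦ s * exp (1 - s) * E) ((1 - t) * exp (1 - t) * E) t :=
    (((hasDerivAt_id' t).mul hlin.exp).mul_const E).congr_deriv (by ring)
  exact (((hasDerivAt_id' t).mul_const (exp E)).sub
    (hlin.mul (hexponent.exp.sub_const 1))).congr_deriv (by ring)

lemma monotoneOn_gap {E : ℝ} (hE : 0 ≤ E) : MonotoneOn (gap E) (Set.Icc 0 1) := by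
  refine monotoneOn_of_hasDerivWithinAt_nonneg (convex_Icc 0 1)
    (fun t _ ↦ (hasDerivAt_gap E t).continuousAt.continuousWithinAt)
    (fun t _ ↦ (hasDerivAt_gap E t).hasDerivWithinAt) fun t ht ↦ ?_
  rw [interior_Icc] at ht
  have hexp : 1 ≤ exp (t * exp (1 - t) * E) := one_le_exp (by have := ht.1; positivity)
  linarith [sq_mul_exp_mul_exp_le_exp hE ht.1.le ht.2.le]

lemma one_sub_mul_exp_sub_one_le {E z : ℝ} (hE : 0 ≤ E) (hz0 : 0 ≤ z) (hz1 : z ≤ 1) :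
    (1 - z) * (exp (z * exp (1 - z) * E) - 1) ≤ z * exp E := by
  have h := monotoneOn_gap hE ⟨le_rfl, zero_le_one⟩ ⟨hz0, hz1⟩ hz0
  simp only [gap, zero_mul, sub_zero, mul_zero, exp_zero, sub_self] at h
  linarith

end BalanceSWOR

theorem subcase2_general (y z : ℝ) (hz0 : 0 ≤ z) (hz1 : z < 1) :
    Real.exp (z * Real.exp y) ≤ 1 + (z / (1 - z)) * Real.exp (Real.exp (y + z - 1)) := by
  have h := BalanceSWOR.one_sub_mul_exp_sub_one_le (exp_pos (y + z - 1)).le hz0 hz1.le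
  have hexponent : z * exp (1 - z) * exp (y + z - 1) = z * exp y := by
    rw [mul_assoc, ← exp_add]; ring_nf
  rw [hexponent] at h
  rw [div_mul_eq_mul_div, ← sub_le_iff_le_add', le_div_iff₀ (by linarith)]
  linarith

/-- Subcase 2 inequality: for `0 ≤ z < 1`, `y > 0`, `y + z > 1`:
`exp(z e^y) ≤ 1 + (z/(1-z)) exp(e^{y+z-1})`. -/
theorem subcase2 (y z : ℝ) (hz0 : 0 ≤ z) (hz1 : z < 1) (hy : 0 < y) (hyz : 1 < y + z) :
    Real.exp (z * Real.exp y) ≤ 1 + (z / (1 - z)) * Real.exp (Real.exp (y + z - 1)) :=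
  subcase2_general y z hz0 hz1
end

section
/- For every real number α with 0 ≤ α ≤ 1: (e − 2α)^α · (1 − α)^{1−α} ≤ 1, where e denotes Euler's number (with the convention 0^0 = 1). -/
/-!
Taking logarithms, it suffices to show `α log (e - 2α) + (1 - α) log (1 - α) ≤ 0` for `α < 1`.
Writing `log (e - 2α) = 1 + log (1 - 2α/e)` and bounding both logarithms by the first two terms
of `log (1 - x) = -x - x²/2 - ⋯`, the left side is at most `α² (1/2 - 2/e) + α³ (1/2 - 2/e²)`,
which is at most `α² (e² - 2e - 2) / e² ≤ 0` because `e < 1 + √3`.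
-/

open Real

lemma Real.log_one_sub_le_neg_sub_sq_div_two {x : ℝ} (hx₀ : 0 ≤ x) (hx₁ : x < 1) :
    log (1 - x) ≤ -x - x ^ 2 / 2 := by
  have hsum := hasSum_pow_div_log_of_abs_lt_one (abs_lt.2 ⟨by linarith, hx₁⟩)
  have := sum_le_hasSum (Finset.range 2) (fun n _ => by positivity) hsum
  norm_num [Finset.sum_range_succ] at this
  linarith

lemma Real.exp_one_sq_lt : exp 1 ^ 2 < 2 * exp 1 + 2 := by
  nlinarith [exp_one_lt_d9, exp_one_gt_d9]

lemma Real.log_exp_one_sub_le {y : ℝ} (hy₀ : 0 ≤ y) (hy : y < exp 1) :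
    log (exp 1 - y) ≤ 1 - y / exp 1 - (y / exp 1) ^ 2 / 2 := by
  have he : exp 1 ≠ 0 := (exp_pos 1).ne'
  have hx₁ : y / exp 1 < 1 := (div_lt_one (exp_pos 1)).2 hy
  have hfactor : exp 1 - y = exp 1 * (1 - y / exp 1) := by field_simp
  rw [hfactor, log_mul he (sub_pos.2 hx₁).ne', log_exp]
  linarith [log_one_sub_le_neg_sub_sq_div_two (by positivity : 0 ≤ y / exp 1) hx₁]

/-- For `0 ≤ α ≤ 1`: `(e - 2α)^α (1-α)^{1-α} ≤ 1` (real powers, with `0^0 = 1`). -/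
theorem young_ineq (a : ℝ) (ha0 : 0 ≤ a) (ha1 : a ≤ 1) :
    (Real.exp 1 - 2 * a) ^ a * (1 - a) ^ (1 - a) ≤ 1 := by
  obtain rfl | ha1 := ha1.eq_or_lt
  · norm_num
    linarith [exp_one_lt_d9]
  have h2a : 2 * a < exp 1 := by linarith [exp_one_gt_d9]
  rw [rpow_def_of_pos (sub_pos.2 h2a), rpow_def_of_pos (sub_pos.2 ha1), ← exp_add,
    exp_le_one_iff]
  have hfirst := log_exp_one_sub_le (by positivity) h2a
  have hsecond := log_one_sub_le_neg_sub_sq_div_two ha0 ha1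
  have hE2 : 4 ≤ exp 1 ^ 2 := by nlinarith [exp_one_gt_d9]
  calc log (exp 1 - 2 * a) * a + log (1 - a) * (1 - a)
      ≤ (1 - 2 * a / exp 1 - (2 * a / exp 1) ^ 2 / 2) * a + (-a - a ^ 2 / 2) * (1 - a) := by
        gcongr
    _ = a ^ 2 * ((exp 1 ^ 2 - 4 * exp 1) + a * (exp 1 ^ 2 - 4)) / (2 * exp 1 ^ 2) := by
        field_simp
        ring
    _ ≤ 0 := by
        refine div_nonpos_of_nonpos_of_nonneg (mul_nonpos_of_nonneg_of_nonpos (sq_nonneg a) ?_)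
          (by positivity)
        nlinarith [exp_one_sq_lt, mul_le_mul_of_nonneg_right ha1.le (sub_nonneg.2 hE2)]
end

section
/- For every real number α with 0 ≤ α ≤ 1: 1 − α + ((e − 2)/e)·α² ≤ e^{−α}, where e denotes Euler's number. -/
/-!
The Taylor polynomials of `exp` alternate around it on `x ≤ 0` (the remainder of order
`n + 1` vanishes at `0` and has the remainder of order `n` as derivative), so
`e^{-α} ≥ 1 - α + α²/2 - α³/6 ≥ 1 - α + α²/3` for `0 ≤ α ≤ 1`,
while `(e - 2)/e = 1 - 2/e ≤ 1/3` because `e ≤ 3`.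
-/

open Finset Nat

namespace Real

theorem hasDerivAt_sum_range_succ_pow_div_factorial (n : ℕ) (x : ℝ) :
    HasDerivAt (fun y : ℝ => ∑ k ∈ range (n + 1), y ^ k / k !)
      (∑ k ∈ range n, x ^ k / k !) x := by
  induction n with
  | zero => simpa using hasDerivAt_const x (1 : ℝ)
  | succ n ih =>
    have hterm : HasDerivAt (fun y : ℝ => y ^ (n + 1) / (n + 1)!) (x ^ n / n !) x := by
      have h := (hasDerivAt_pow (n + 1) x).div_const ((n + 1)! : ℝ)
      rw [add_tsub_cancel_right, factorial_succ, cast_mul,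
        mul_div_mul_left _ _ (by positivity)] at h
      rwa [factorial_succ, cast_mul]
    rw [sum_range_succ _ n]
    simp only [sum_range_succ _ (n + 1)]
    exact ih.fun_add hterm

theorem neg_one_pow_mul_exp_sub_sum_range_nonneg {x : ℝ} (hx : x ≤ 0) (n : ℕ) :
    0 ≤ (-1) ^ n * (exp x - ∑ k ∈ range n, x ^ k / k !) := by
  induction n generalizing x with
  | zero => simpa using (exp_pos x).le
  | succ n ih =>
    set f : ℝ → ℝ := fun y => (-1) ^ n * (exp y - ∑ k ∈ range (n + 1), y ^ k / k !)
    have hf : ∀ y, HasDerivAt f ((-1) ^ n * (exp y - ∑ k ∈ range n, y ^ k / k !)) y :=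
      fun y => ((hasDerivAt_exp y).sub
        (hasDerivAt_sum_range_succ_pow_div_factorial n y)).const_mul _
    have hmono : MonotoneOn f (Set.Iic 0) := by
      refine monotoneOn_of_hasDerivWithinAt_nonneg (convex_Iic 0)
        (fun y _ => (hf y).continuousAt.continuousWithinAt)
        (fun y _ => (hf y).hasDerivWithinAt) fun y hy => ?_
      rw [interior_Iic] at hy
      exact ih hy.le
    have hf0 : f 0 = 0 := by simp [f, sum_range_succ']
    have hfx : f x ≤ f 0 := hmono hx Set.self_mem_Iic hx
    calc 0 ≤ -f x := by linarith
      _ = _ := by simp only [f, pow_succ]; ring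

theorem one_sub_add_sq_div_two_sub_cube_div_six_le_exp_neg {x : ℝ} (hx : 0 ≤ x) :
    1 - x + x ^ 2 / 2 - x ^ 3 / 6 ≤ exp (-x) := by
  have := neg_one_pow_mul_exp_sub_sum_range_nonneg (neg_nonpos.2 hx) 4
  simp only [sum_range_succ, range_zero, sum_empty] at this
  norm_num [factorial] at this
  linarith

theorem exp_one_sub_two_div_exp_one_le : (exp 1 - 2) / exp 1 ≤ 1 / 3 := by
  rw [div_le_iff₀ (exp_pos 1)]
  linarith [exp_one_lt_three]

end Real

/-- For `0 ≤ α ≤ 1`: `1 - α + ((e-2)/e) α² ≤ e^{-α}`. -/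
theorem final_ineq (a : ℝ) (ha0 : 0 ≤ a) (ha1 : a ≤ 1) :
    1 - a + ((Real.exp 1 - 2) / Real.exp 1) * a ^ 2 ≤ Real.exp (-a) := by
  have hcube : a ^ 3 ≤ a ^ 2 := pow_le_pow_of_le_one ha0 ha1 (by norm_num)
  calc 1 - a + ((Real.exp 1 - 2) / Real.exp 1) * a ^ 2
      ≤ 1 - a + 1 / 3 * a ^ 2 := by
        gcongr 1 - a + ?_ * a ^ 2; exact Real.exp_one_sub_two_div_exp_one_le
    _ ≤ 1 - a + a ^ 2 / 2 - a ^ 3 / 6 := by linarith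
    _ ≤ Real.exp (-a) := Real.one_sub_add_sq_div_two_sub_cube_div_six_le_exp_neg ha0
end

section
/- Let q : [0,∞) → ℝ be defined by q(y) = e^{−y} for 0 ≤ y ≤ 1 and q(y) = e^{−e^{y−1}} for y > 1. Then q(0) = 1, q takes values in [0,1], q is nonincreasing, q is convex, and q is differentiable on (0,∞); in particular q is differentiable at y = 1 with q'(1) = −1/e. -/
open Real Set Filter

theorem hasDerivAt_ite_le {f g f' g' : ℝ → ℝ} {a : ℝ}
    (hf : ∀ x, HasDerivAt f (f' x) x) (hg : ∀ x, HasDerivAt g (g' x) x)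
    (ha : f a = g a) (ha' : f' a = g' a) (x : ℝ) :
    HasDerivAt (fun y => if y ≤ a then f y else g y) (if x ≤ a then f' x else g' x) x := by
  rcases lt_trichotomy x a with hx | rfl | hx
  · rw [if_pos hx.le]
    refine (hf x).congr_of_eventuallyEq ?_
    filter_upwards [eventually_lt_nhds hx] with y hy using if_pos hy.le
  · rw [if_pos le_rfl]
    have hleft : HasDerivWithinAt (fun y => if y ≤ x then f y else g y) (f' x) (Iic x) x :=
      (hf x).hasDerivWithinAt.congr (fun y hy => if_pos hy) (if_pos le_rfl)
    have hright : HasDerivWithinAt (fun y => if y ≤ x then f y else g y) (f' x) (Ici x) x := by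
      rw [ha']
      refine (hg x).hasDerivWithinAt.congr (fun y hy => ?_) (by rw [if_pos le_rfl, ha])
      rcases (mem_Ici.mp hy).eq_or_lt with rfl | hy
      · rw [if_pos le_rfl, ha]
      · exact if_neg hy.not_ge
    simpa [Iic_union_Ici] using hleft.union hright
  · rw [if_neg hx.not_ge]
    refine (hg x).congr_of_eventuallyEq ?_
    filter_upwards [eventually_gt_nhds hx] with y hy using if_neg hy.not_ge

theorem mul_exp_neg_le_mul_exp_neg {s t : ℝ} (ht : 1 ≤ t) (hts : t ≤ s) :
    s * exp (-s) ≤ t * exp (-t) := by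
  have key : s ≤ t * exp (s - t) := by nlinarith [add_one_le_exp (s - t)]
  calc s * exp (-s) ≤ t * exp (s - t) * exp (-s) := by gcongr
    _ = t * exp (-t) := by rw [mul_assoc, ← exp_add]; ring_nf

noncomputable def qDeriv (y : ℝ) : ℝ :=
  if y ≤ 1 then -exp (-y) else -(exp (y - 1) * exp (-exp (y - 1)))

theorem hasDerivAt_q (x : ℝ) : HasDerivAt q (qDeriv x) x := by
  unfold q qDeriv
  exact hasDerivAt_ite_le (a := 1) (fun y => by simpa using (hasDerivAt_neg y).exp)
    (fun y => by simpa [mul_comm] using (((hasDerivAt_id y).sub_const 1).exp.neg).exp)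
    (by norm_num) (by norm_num) x

theorem q_pos (y : ℝ) : 0 < q y := by
  unfold q; split <;> positivity

theorem q_le_one {y : ℝ} (hy : 0 ≤ y) : q y ≤ 1 := by
  unfold q; split <;> simp [hy, (exp_pos _).le]

theorem qDeriv_nonpos (y : ℝ) : qDeriv y ≤ 0 := by
  unfold qDeriv; split <;> simp [(exp_pos _).le, mul_nonneg]

theorem monotone_qDeriv : Monotone qDeriv := by
  refine MonotoneOn.Iic_union_Ici (a := 1) ?_ ?_
  · intro x hx y hy hxy
    simp only [qDeriv, if_pos (mem_Iic.mp hx), if_pos (mem_Iic.mp hy)]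
    gcongr
  · have hEq : EqOn (fun y => -(exp (y - 1) * exp (-exp (y - 1)))) qDeriv (Ici 1) := by
      intro y hy
      rcases (mem_Ici.mp hy).eq_or_lt with rfl | hy
      · simp [qDeriv]
      · simp [qDeriv, hy.not_ge]
    refine MonotoneOn.congr (fun x hx y hy hxy => neg_le_neg ?_) hEq
    exact mul_exp_neg_le_mul_exp_neg (one_le_exp (by linarith [mem_Ici.mp hx]))
      (exp_le_exp.mpr (by linarith))

/-- Regularity of `q`: `q 0 = 1`, `q` takes values in `[0,1]`, `q` is nonincreasing and
convex on `[0,∞)`, differentiable on `(0,∞)`, and `q'(1) = -1/e`. -/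
theorem q_regularity :
    q 0 = 1 ∧
    (∀ y, 0 ≤ y → q y ∈ Set.Icc (0:ℝ) 1) ∧
    AntitoneOn q (Set.Ici 0) ∧
    ConvexOn ℝ (Set.Ici 0) q ∧
    (∀ y ∈ Set.Ioi (0:ℝ), DifferentiableAt ℝ q y) ∧
    HasDerivAt q (-(1 / Real.exp 1)) 1 := by
  have hq : Differentiable ℝ q := fun y => (hasDerivAt_q y).differentiableAt
  have hderiv : deriv q = qDeriv := funext fun y => (hasDerivAt_q y).deriv
  refine ⟨by simp [q], fun y hy => ⟨(q_pos y).le, q_le_one hy⟩, ?_, ?_, fun y _ => hq y, ?_⟩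
  · exact (antitone_of_deriv_nonpos hq (hderiv ▸ qDeriv_nonpos)).antitoneOn _
  · have hmono : Monotone (deriv q) := hderiv ▸ monotone_qDeriv
    exact (hmono.convexOn_univ_of_deriv hq).subset (subset_univ _) (convex_Ici 0)
  · simpa [qDeriv, exp_neg] using hasDerivAt_q 1
end

section
/- Let q : [0,∞) → [0,1] be differentiable, convex, and nonincreasing. Then the function b : [0,∞) → ℝ defined by b(y) = −e^{y} · ∫_y^∞ q'(z)·e^{−z} dz is nonincreasing. -/
/-!
Substituting `z = y + t` gives `b(y) = ∫_0^∞ -q'(y + t) e^{-t} dt`. Convexity makes `q'` nondecreasing,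
so the integrand decreases pointwise in `y`; monotonicity of `q` makes `q'` nonpositive, so
`|q'(y + t)| ≤ -q'(0)` and all these integrals converge.
-/

open Set MeasureTheory Real

theorem ConvexOn.monotoneOn_of_hasDerivAt {S : Set ℝ} {f f' : ℝ → ℝ} (hf : ConvexOn ℝ S f)
    (hd : ∀ x ∈ S, HasDerivAt f (f' x) x) : MonotoneOn f' S := by
  intro x hx y hy hxy
  rw [← (hd x hx).deriv, ← (hd y hy).deriv]
  exact hf.monotoneOn_deriv (fun z hz => (hd z hz).differentiableAt) hx hy hxy

theorem HasDerivAt.nonpos_of_antitoneOn_of_uniqueDiffOn {S : Set ℝ} {g : ℝ → ℝ} {g' x : ℝ}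
    (hd : HasDerivAt g g' x) (hg : AntitoneOn g S) (hS : UniqueDiffOn ℝ S) (hx : x ∈ S) :
    g' ≤ 0 :=
  hd.hasDerivWithinAt.derivWithin (hS x hx) ▸ hg.derivWithin_nonpos

theorem exp_mul_setIntegral_Ioi_mul_exp_neg (f : ℝ → ℝ) (y : ℝ) :
    exp y * ∫ z in Ioi y, f z * exp (-z) = ∫ t in Ioi 0, f (t + y) * exp (-t) := by
  have hshift : ∫ z in Ioi y, f z * exp (-z) = ∫ t in Ioi 0, f (t + y) * exp (-(t + y)) := by
    rw [show Ioi (0 : ℝ) = (· + y) ⁻¹' Ioi y by ext; simp]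
    exact ((measurePreserving_add_right volume y).setIntegral_preimage_emb
      (measurableEmbedding_addRight y) _ _).symm
  rw [hshift, ← integral_const_mul]
  congr 1 with t
  rw [neg_add, exp_add, exp_neg y]
  field_simp

theorem integrableOn_Ioi_mul_exp_neg_of_monotoneOn {g : ℝ → ℝ} {C : ℝ}
    (hg : MonotoneOn g (Ioi 0)) (hC : ∀ t ∈ Ioi (0 : ℝ), |g t| ≤ C) :
    IntegrableOn (fun t => g t * exp (-t)) (Ioi 0) := by
  have hmeas : AEStronglyMeasurable (fun t => g t * exp (-t)) (volume.restrict (Ioi 0)) :=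
    ((aemeasurable_restrict_of_monotoneOn measurableSet_Ioi hg).mul
      (measurable_exp.comp measurable_neg).aemeasurable).aestronglyMeasurable
  refine Integrable.mono' ((exp_neg_integrableOn_Ioi 0 one_pos).const_mul C) hmeas ?_
  filter_upwards [ae_restrict_mem measurableSet_Ioi] with t ht
  rw [norm_mul, norm_eq_abs, norm_of_nonneg (exp_pos _).le, neg_one_mul]
  exact mul_le_mul_of_nonneg_right (hC t ht) (exp_pos _).le

theorem b_antitone_general (q q' : ℝ → ℝ)
    (hderiv : ∀ y ∈ Set.Ici (0:ℝ), HasDerivAt q (q' y) y)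
    (hconv : ConvexOn ℝ (Set.Ici 0) q)
    (hanti : AntitoneOn q (Set.Ici 0)) :
    AntitoneOn (fun y => -Real.exp y * ∫ z in Set.Ioi y, q' z * Real.exp (-z))
      (Set.Ici 0) := by
  have hmono : MonotoneOn q' (Ici 0) := hconv.monotoneOn_of_hasDerivAt hderiv
  have hnonpos : ∀ x ∈ Ici (0 : ℝ), q' x ≤ 0 := fun x hx =>
    (hderiv x hx).nonpos_of_antitoneOn_of_uniqueDiffOn hanti (uniqueDiffOn_Ici 0) hx
  have hshift : ∀ {y t : ℝ}, 0 ≤ y → 0 < t → t + y ∈ Ici 0 := fun hy ht => by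
    simp only [mem_Ici]; linarith
  have hint : ∀ y ∈ Ici (0 : ℝ), IntegrableOn (fun t => q' (t + y) * exp (-t)) (Ioi 0) :=
    fun y hy => integrableOn_Ioi_mul_exp_neg_of_monotoneOn (C := -q' 0)
      (fun a ha b hb hab => hmono (hshift hy ha) (hshift hy hb) (by linarith))
      fun t ht => abs_le.2 ⟨by linarith [hmono self_mem_Ici (hshift hy ht) (hshift hy ht)],
        by linarith [hnonpos _ (hshift hy ht), hnonpos 0 self_mem_Ici]⟩
  intro y₁ hy₁ y₂ hy₂ h12
  simp only [neg_mul, exp_mul_setIntegral_Ioi_mul_exp_neg, neg_le_neg_iff]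
  refine setIntegral_mono_on (hint y₁ hy₁) (hint y₂ hy₂) measurableSet_Ioi fun t ht => ?_
  exact mul_le_mul_of_nonneg_right
    (hmono (hshift hy₁ ht) (hshift hy₂ ht) (by linarith)) (exp_pos _).le

/-- If `q : [0,∞) → [0,1]` is differentiable (with derivative `q'`), convex and
nonincreasing, then `b(y) = -e^y ∫_y^∞ q'(z) e^{-z} dz` is nonincreasing on `[0,∞)`. -/
theorem b_antitone (q q' : ℝ → ℝ)
    (hmem : ∀ y, 0 ≤ y → q y ∈ Set.Icc (0:ℝ) 1)
    (hderiv : ∀ y ∈ Set.Ici (0:ℝ), HasDerivAt q (q' y) y)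
    (hconv : ConvexOn ℝ (Set.Ici 0) q)
    (hanti : AntitoneOn q (Set.Ici 0)) :
    AntitoneOn (fun y => -Real.exp y * ∫ z in Set.Ioi y, q' z * Real.exp (-z))
      (Set.Ici 0) :=
  b_antitone_general q q' hderiv hconv hanti
end

section
/- Define α, β : [0,1] → ℝ by α(t) = 1 − (1/(e(1−ln 2)))·(2e)^t + ((1+ln 2)/(e²(1−ln 2)))·e^{2t} and β(t) = (1/(2e(1−ln 2)))·(2e)^t − (1/(e²(1−ln 2)))·e^{2t}. Then: (1) α(0) + β(0) = 1 − (1/(1−ln 2))·(1/(2e) − (ln 2)/e²) > 0.706; (2) α(1) = β(1) = 0; (3) α(t) ≥ 0 and β(t) ≥ 0 for all 0 ≤ t ≤ 1; (4) α'(t) = −2(1+ln 2)·β(t) for all 0 ≤ t ≤ 1; (5) β'(t) = α(t) + (3+ln 2)·β(t) − 1 for all 0 ≤ t ≤ 1. -/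
/-- `α(t) = 1 - (1/(e(1-ln 2)))(2e)^t + ((1+ln 2)/(e²(1-ln 2))) e^{2t}`. -/
noncomputable def alphaTH (t : ℝ) : ℝ :=
  1 - (1 / (Real.exp 1 * (1 - Real.log 2))) * (2 * Real.exp 1) ^ t
    + ((1 + Real.log 2) / ((Real.exp 1) ^ 2 * (1 - Real.log 2))) * Real.exp (2 * t)

/-- `β(t) = (1/(2e(1-ln 2)))(2e)^t - (1/(e²(1-ln 2))) e^{2t}`. -/
noncomputable def betaTH (t : ℝ) : ℝ :=
  (1 / (2 * Real.exp 1 * (1 - Real.log 2))) * (2 * Real.exp 1) ^ t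
    - (1 / ((Real.exp 1) ^ 2 * (1 - Real.log 2))) * Real.exp (2 * t)

/-
Both coefficients are combinations of `(2e)^t = e^{(1 + ln 2)t}` and `e^{2t}`, whose exponents
`1 + ln 2` and `2` are the eigenvalues of the linear system in (4)–(5), so the derivative identities
and the boundary values are algebra. Writing `β(t) = (e·(2e)^t − 2e^{2t}) / (2e²(1 − ln 2))`,
nonnegativity of `β` on `[0, 1]` reduces to `(1 − ln 2)(1 − t) ≥ 0` after taking logarithms. Then
`α' = −2(1 + ln 2)β ≤ 0`, so `α` decreases on `[0, 1]` to `α(1) = 0`.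
-/

open Real

lemma one_sub_log_two_pos : 0 < 1 - log 2 := by
  linarith [log_two_lt_d9]

lemma log_two_mul_exp_one : log (2 * exp 1) = log 2 + 1 := by
  rw [log_mul two_ne_zero (exp_ne_zero 1), log_exp]

lemma hasDerivAt_two_mul_exp_one_rpow (t : ℝ) :
    HasDerivAt (fun t => (2 * exp 1) ^ t) ((2 * exp 1) ^ t * (log 2 + 1)) t := by
  simpa only [log_two_mul_exp_one] using
    (hasStrictDerivAt_const_rpow (by positivity : (0 : ℝ) < 2 * exp 1) t).hasDerivAt

lemma hasDerivAt_exp_two_mul (t : ℝ) :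
    HasDerivAt (fun t => exp (2 * t)) (exp (2 * t) * 2) t := by
  simpa only [mul_one] using ((hasDerivAt_id' t).const_mul 2).exp

lemma hasDerivAt_alphaTH (t : ℝ) :
    HasDerivAt alphaTH (-2 * (1 + log 2) * betaTH t) t := by
  refine ((((hasDerivAt_two_mul_exp_one_rpow t).const_mul _).const_sub 1).add
    ((hasDerivAt_exp_two_mul t).const_mul _)).congr_deriv ?_
  have := one_sub_log_two_pos.ne'
  rw [betaTH]
  field_simp
  ring

lemma hasDerivAt_betaTH (t : ℝ) :
    HasDerivAt betaTH (alphaTH t + (3 + log 2) * betaTH t - 1) t := by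
  refine (((hasDerivAt_two_mul_exp_one_rpow t).const_mul _).sub
    ((hasDerivAt_exp_two_mul t).const_mul _)).congr_deriv ?_
  have := one_sub_log_two_pos.ne'
  rw [alphaTH, betaTH]
  field_simp
  ring

lemma alphaTH_one : alphaTH 1 = 0 := by
  have := one_sub_log_two_pos.ne'
  rw [alphaTH, rpow_one, mul_one, exp_one_pow, Nat.cast_ofNat]
  field_simp
  ring

lemma betaTH_one : betaTH 1 = 0 := by
  have := one_sub_log_two_pos.ne'
  rw [betaTH, rpow_one, mul_one, exp_one_pow, Nat.cast_ofNat]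
  field_simp
  ring

lemma two_mul_exp_two_mul_le {t : ℝ} (ht : t ≤ 1) : 2 * exp (2 * t) ≤ exp 1 * (2 * exp 1) ^ t := by
  rw [rpow_def_of_pos (by positivity), log_two_mul_exp_one, ← exp_add,
    show 2 * exp (2 * t) = exp (log 2 + 2 * t) by rw [exp_add, exp_log two_pos], exp_le_exp]
  nlinarith [one_sub_log_two_pos]

lemma betaTH_eq_div (t : ℝ) :
    betaTH t = (exp 1 * (2 * exp 1) ^ t - 2 * exp (2 * t)) / (2 * exp 1 ^ 2 * (1 - log 2)) := by
  have := one_sub_log_two_pos.ne'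
  rw [betaTH]
  field_simp

lemma betaTH_nonneg {t : ℝ} (ht : t ≤ 1) : 0 ≤ betaTH t := by
  rw [betaTH_eq_div]
  have := one_sub_log_two_pos
  exact div_nonneg (sub_nonneg.2 (two_mul_exp_two_mul_le ht)) (by positivity)

lemma alphaTH_nonneg {t : ℝ} (ht : t ∈ Set.Icc (0 : ℝ) 1) : 0 ≤ alphaTH t := by
  have hanti : AntitoneOn alphaTH (Set.Icc 0 1) := by
    refine antitoneOn_of_deriv_nonpos (convex_Icc 0 1)
      (fun x _ => (hasDerivAt_alphaTH x).continuousAt.continuousWithinAt)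
      (fun x _ => (hasDerivAt_alphaTH x).differentiableAt.differentiableWithinAt) fun x hx => ?_
    rw [interior_Icc] at hx
    rw [(hasDerivAt_alphaTH x).deriv]
    nlinarith [betaTH_nonneg hx.2.le, log_pos one_lt_two]
  simpa only [alphaTH_one] using hanti ht (Set.right_mem_Icc.2 zero_le_one) ht.2

lemma alphaTH_zero_add_betaTH_zero :
    alphaTH 0 + betaTH 0 = 1 - (1 / (1 - log 2)) * (1 / (2 * exp 1) - log 2 / exp 1 ^ 2) := by
  have := one_sub_log_two_pos.ne'
  rw [alphaTH, betaTH, rpow_zero, mul_zero, exp_zero]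
  field_simp
  ring

lemma alphaTH_zero_add_betaTH_zero_gt : (0.706 : ℝ) < alphaTH 0 + betaTH 0 := by
  have he₁ := exp_one_gt_d9
  have he₂ := exp_one_lt_d9
  have hl₁ := log_two_gt_d9
  have hl₂ := log_two_lt_d9
  have he_sq : (7.389056088 : ℝ) < exp 1 ^ 2 := by nlinarith
  have hc : (0.3068528192 : ℝ) < 1 - log 2 := by linarith
  suffices (exp 1 - 2 * log 2) / (2 * exp 1 ^ 2 * (1 - log 2)) < 0.294 by
    have hne := one_sub_log_two_pos.ne'
    rw [alphaTH_zero_add_betaTH_zero, show 1 / (1 - log 2) * (1 / (2 * exp 1) - log 2 / exp 1 ^ 2)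
      = (exp 1 - 2 * log 2) / (2 * exp 1 ^ 2 * (1 - log 2)) by field_simp]
    linarith
  -- `α(0) + β(0) ≈ 0.70627`: the margin is below `3·10⁻⁴`, hence the nine-digit bounds
  rw [div_lt_iff₀ (by positivity)]
  nlinarith

/-- Properties of the potential-function coefficients `α` and `β` for the
derandomized Top Half Sampling algorithm. -/
theorem alpha_beta_properties :
    (alphaTH 0 + betaTH 0 =
      1 - (1 / (1 - Real.log 2)) * (1 / (2 * Real.exp 1) - Real.log 2 / (Real.exp 1) ^ 2)) ∧
    ((0.706 : ℝ) < alphaTH 0 + betaTH 0) ∧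
    alphaTH 1 = 0 ∧ betaTH 1 = 0 ∧
    (∀ t ∈ Set.Icc (0:ℝ) 1, 0 ≤ alphaTH t) ∧
    (∀ t ∈ Set.Icc (0:ℝ) 1, 0 ≤ betaTH t) ∧
    (∀ t ∈ Set.Icc (0:ℝ) 1, HasDerivAt alphaTH (-2 * (1 + Real.log 2) * betaTH t) t) ∧
    (∀ t ∈ Set.Icc (0:ℝ) 1,
      HasDerivAt betaTH (alphaTH t + (3 + Real.log 2) * betaTH t - 1) t) := by
  exact ⟨alphaTH_zero_add_betaTH_zero, alphaTH_zero_add_betaTH_zero_gt, alphaTH_one, betaTH_one,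
    fun t ht => alphaTH_nonneg ht, fun t ht => betaTH_nonneg ht.2,
    fun t _ => hasDerivAt_alphaTH t, fun t _ => hasDerivAt_betaTH t⟩
end

section
/- Define p : ℝ → ℝ by p(x) = min{2x, 1}. Let J be a finite set, let ρ_j ≥ 0 for j ∈ J, and let ρ = ∑_{j∈J} ρ_j satisfy 0 ≤ ρ ≤ 1. Then p(ρ) − ρ ≥ (1/2) · ∑_{j∈J} ( p(ρ) − p(ρ − ρ_j) − (2ρ_j − 1)^+ ), where t^+ denotes max{t, 0}. -/
/-!
Write `ρ = ∑ ρ_j`. If `2ρ ≤ 1`, the `j`-th summand is at most `p(ρ) - p(ρ - ρ_j) = 2ρ_j`, and these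
add up to `2ρ = 2(p(ρ) - ρ)`. If `2ρ > 1`, put `c = 2ρ - 1 ∈ (0, 1]` and `x_j = 2ρ_j`, so that
`∑ x_j = 1 + c`; the `j`-th summand is then `min ((x_j - c)⁺, 1 - c)`, and we need the sum to be at
most `1 - c`. This is clear when at most one `x_j` exceeds `c`; otherwise those `x_j` sum to at most
`1 + c` while at least `2c` is subtracted from them.
-/

open Finset

section LinearOrderedField

variable {𝕜 : Type*} [Field 𝕜] [LinearOrder 𝕜] [IsStrictOrderedRing 𝕜]

theorem max_sub_zero_sub_max_sub_zero_eq_min {x c : 𝕜} (hc : c ≤ 1) :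
    max (x - c) 0 - max (x - 1) 0 = min (max (x - c) 0) (1 - c) := by
  simp only [max_def, min_def]
  split_ifs <;> linarith

theorem sum_min_max_sub_zero_le {ι : Type*} (s : Finset ι) (x : ι → 𝕜) {c : 𝕜}
    (hx : ∀ i ∈ s, 0 ≤ x i) (hc₀ : 0 ≤ c) (hc₁ : c ≤ 1) (hsum : ∑ i ∈ s, x i ≤ 1 + c) :
    ∑ i ∈ s, min (max (x i - c) 0) (1 - c) ≤ 1 - c := by
  set S := s.filter (fun i => c < x i)
  have h_supp : ∑ i ∈ S, min (max (x i - c) 0) (1 - c) =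
      ∑ i ∈ s, min (max (x i - c) 0) (1 - c) := by
    refine sum_filter_of_ne fun i _ hi => ?_
    by_contra! h
    exact hi (by simp [max_eq_right (sub_nonpos.2 h), hc₁])
  rw [← h_supp]
  rcases le_or_gt #S 1 with hS | hS
  · calc ∑ i ∈ S, min (max (x i - c) 0) (1 - c) ≤ #S • (1 - c) :=
          sum_le_card_nsmul _ _ _ fun i _ => min_le_right _ _
      _ ≤ 1 • (1 - c) := nsmul_le_nsmul_left (by linarith) hS
      _ = 1 - c := one_nsmul _
  · have hS_le : ∑ i ∈ S, x i ≤ ∑ i ∈ s, x i :=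
      sum_le_sum_of_subset_of_nonneg (filter_subset _ _) fun i hi _ => hx i hi
    have hS_two : (2 : 𝕜) ≤ #S := by exact_mod_cast hS
    calc ∑ i ∈ S, min (max (x i - c) 0) (1 - c) ≤ ∑ i ∈ S, (x i - c) := by
          refine sum_le_sum fun i hi => (min_le_left _ _).trans ?_
          exact max_le le_rfl (sub_nonneg.2 (mem_filter.1 hi).2.le)
      _ = ∑ i ∈ S, x i - #S * c := by rw [sum_sub_distrib, sum_const, nsmul_eq_mul]
      _ ≤ 1 - c := by nlinarith

end LinearOrderedField

theorem p_property_general {J : Type*} [Fintype J] (ρj : J → ℝ) (hρj : ∀ j, 0 ≤ ρj j)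
    (hsum1 : ∑ j, ρj j ≤ 1) :
    (1/2) * ∑ j, (min (2 * ∑ k, ρj k) 1 - min (2 * ((∑ k, ρj k) - ρj j)) 1
        - max (2 * ρj j - 1) 0) ≤
      min (2 * ∑ k, ρj k) 1 - ∑ k, ρj k := by
  set ρ := ∑ k, ρj k with hρ
  rcases le_or_gt (2 * ρ) 1 with hsmall | hlarge
  · have hterm : ∀ j, min (2 * ρ) 1 - min (2 * (ρ - ρj j)) 1 - max (2 * ρj j - 1) 0
        ≤ 2 * ρj j := by
      intro j
      rw [min_eq_left hsmall, min_eq_left (by linarith [hρj j])]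
      linarith [le_max_right (2 * ρj j - 1) 0]
    have h_sum := sum_le_sum fun j (_ : j ∈ univ) => hterm j
    rw [← mul_sum, ← hρ] at h_sum
    linarith [min_eq_left hsmall]
  · have hterm : ∀ j, min (2 * ρ) 1 - min (2 * (ρ - ρj j)) 1 - max (2 * ρj j - 1) 0 =
        min (max (2 * ρj j - (2 * ρ - 1)) 0) (1 - (2 * ρ - 1)) := by
      intro j
      rw [← max_sub_zero_sub_max_sub_zero_eq_min (by linarith), min_eq_right hlarge.le,
        ← max_sub_sub_left, sub_self]
      ring_nf
    have h_sum := sum_min_max_sub_zero_le univ (fun j => 2 * ρj j) (c := 2 * ρ - 1)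
      (fun j _ => by linarith [hρj j]) (by linarith) (by linarith) (by rw [← mul_sum]; linarith)
    rw [Fintype.sum_congr _ _ hterm]
    linarith [min_eq_right hlarge.le]

/-- For `p(x) = min(2x, 1)`, nonnegative `ρ_j` with `ρ = ∑ ρ_j ∈ [0,1]`:
`p(ρ) - ρ ≥ (1/2) ∑_j (p(ρ) - p(ρ - ρ_j) - (2ρ_j - 1)⁺)`. -/
theorem p_property {J : Type*} [Fintype J] (ρj : J → ℝ) (hρj : ∀ j, 0 ≤ ρj j)
    (hsum0 : 0 ≤ ∑ j, ρj j) (hsum1 : ∑ j, ρj j ≤ 1) :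
    (1/2) * ∑ j, (min (2 * ∑ k, ρj k) 1 - min (2 * ((∑ k, ρj k) - ρj j)) 1
        - max (2 * ρj j - 1) 0) ≤
      min (2 * ∑ k, ρj k) 1 - ∑ k, ρj k :=
  p_property_general ρj hρj hsum1
end

section
/- Let S be a finite set and let a, b : S → ℝ satisfy a_j ≥ 0 and b_j ≥ 0 for all j ∈ S, ∑_{j∈S} a_j = ∑_{j∈S} b_j = F, and a_j + b_j ≤ F for every j ∈ S. Then there exists f : S × S → ℝ with f(j,k) ≥ 0 for all j,k, f(j,j) = 0 for all j ∈ S, ∑_{k∈S} f(j,k) = a_j for every j ∈ S, and ∑_{j∈S} f(j,k) = b_k for every k ∈ S. -/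
/-!
Realizable (supply, demand) pairs form an additive monoid containing every single edge
`j → k` with `j ≠ k`. If some index `i` is tight, `a i + b i = F`, the problem is the sum of the
edges `i → k` carrying `b k` and `j → i` carrying `a j`. Otherwise pick `j, k` with `j ≠ k`,
`a j ≠ 0`, `b k ≠ 0` (possible since `∑_{k ≠ j} b k = F - b j ≥ a j`) and push along `j → k`
the largest amount keeping the residual problem admissible. Then `a j` or `b k` drops to zero,
so the supports shrink, or some other index becomes tight.
-/

open Finset Function

section Support

variable {ι M : Type*} [DecidableEq ι] [AddGroup M]

lemma support_sub_single_subset {f : ι → M} {j : ι} (hj : f j ≠ 0) (m : M) :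
    support (f - Pi.single j m) ⊆ support f := by
  intro p hp
  obtain rfl | hpj := eq_or_ne p j
  · exact hj
  · simpa [hpj] using hp

lemma support_sub_single_self (f : ι → M) (j : ι) :
    support (f - Pi.single j (f j)) = support f \ {j} := by
  ext p
  obtain rfl | hpj := eq_or_ne p j <;> simp [*]

variable [Finite ι]

lemma ncard_support_sub_single_le {f : ι → M} {j : ι} (hj : f j ≠ 0) (m : M) :
    (support (f - Pi.single j m)).ncard ≤ (support f).ncard :=
  Set.ncard_le_ncard (support_sub_single_subset hj m)

lemma ncard_support_sub_single_self_lt {f : ι → M} {j : ι} (hj : f j ≠ 0) :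
    (support (f - Pi.single j (f j))).ncard < (support f).ncard :=
  Set.ncard_lt_ncard (support_sub_single_self f j ▸ Set.sdiff_singleton_ssubset.2 hj)

end Support

namespace OffDiagTransport

variable {S : Type*} [Fintype S]

structure Admissible (a b : S → ℝ) (F : ℝ) : Prop where
  supply_nonneg : ∀ j, 0 ≤ a j
  demand_nonneg : ∀ j, 0 ≤ b j
  sum_supply : ∑ j, a j = F
  sum_demand : ∑ j, b j = F
  supply_add_demand_le : ∀ j, a j + b j ≤ F

def transportable : AddSubmonoid ((S → ℝ) × (S → ℝ)) where
  carrier := {ab | ∃ f : S → S → ℝ, (∀ j k, 0 ≤ f j k) ∧ (∀ j, f j j = 0) ∧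
    (∀ j, ∑ k, f j k = ab.1 j) ∧ (∀ k, ∑ j, f j k = ab.2 k)}
  zero_mem' := ⟨0, by simp⟩
  add_mem' := by
    rintro _ _ ⟨f, hf₀, hfd, hfr, hfc⟩ ⟨g, hg₀, hgd, hgr, hgc⟩
    refine ⟨f + g, fun j k => add_nonneg (hf₀ j k) (hg₀ j k), fun j => by simp [hfd, hgd],
      fun j => ?_, fun k => ?_⟩ <;> simp [sum_add_distrib, hfr, hgr, hfc, hgc]

variable [DecidableEq S]

def edge (j k : S) (m : ℝ) : (S → ℝ) × (S → ℝ) := (Pi.single j m, Pi.single k m)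

lemma edge_mem {j k : S} (hjk : j ≠ k) {m : ℝ} (hm : 0 ≤ m) : edge j k m ∈ transportable := by
  refine ⟨Pi.single j (Pi.single k m : S → ℝ), fun p q => ?_, fun p => ?_,
    fun p => ?_, fun q => ?_⟩
  · obtain rfl | hpj := eq_or_ne p j <;> obtain rfl | hqk := eq_or_ne q k <;> simp [*]
  · obtain rfl | hpj := eq_or_ne p j <;> simp [*]
  · obtain rfl | hpj := eq_or_ne p j <;> simp [edge, *]
  · simp [edge, ← Finset.sum_apply]

variable {a b : S → ℝ} {F : ℝ}

lemma Admissible.mem_of_tight (h : Admissible a b F) {i : S} (hi : a i + b i = F) :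
    (a, b) ∈ transportable := by
  have hdecomp :
      (a, b) = ∑ k ∈ univ.erase i, edge i k (b k) + ∑ j ∈ univ.erase i, edge j i (a j) := by
    have hb : ∑ k ∈ univ.erase i, b k = a i := by
      rw [sum_erase_eq_sub (mem_univ i), h.sum_demand]; linarith
    have ha : ∑ k ∈ univ.erase i, a k = b i := by
      rw [sum_erase_eq_sub (mem_univ i), h.sum_supply]; linarith
    ext p <;> simp only [edge, Prod.fst_add, Prod.snd_add, Prod.fst_sum, Prod.snd_sum,
      Pi.add_apply, Finset.sum_apply, sum_pi_single] <;>
      obtain rfl | hpi := eq_or_ne p i <;> simp [*]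
  rw [hdecomp]
  exact add_mem (sum_mem fun k hk => edge_mem (ne_of_mem_erase hk).symm (h.demand_nonneg k))
    (sum_mem fun j hj => edge_mem (ne_of_mem_erase hj) (h.supply_nonneg j))

lemma Admissible.sub_edge (h : Admissible a b F) {j k : S} (hjk : j ≠ k) {m : ℝ}
    (hma : m ≤ a j) (hmb : m ≤ b k) (hslack : ∀ i, i ≠ j → i ≠ k → a i + b i ≤ F - m) :
    Admissible (a - Pi.single j m) (b - Pi.single k m) (F - m) where
  supply_nonneg p := by
    obtain rfl | hpj := eq_or_ne p j <;> simp [*, h.supply_nonneg p]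
  demand_nonneg p := by
    obtain rfl | hpk := eq_or_ne p k <;> simp [*, h.demand_nonneg p]
  sum_supply := by simp [sum_sub_distrib, h.sum_supply]
  sum_demand := by simp [sum_sub_distrib, h.sum_demand]
  supply_add_demand_le p := by
    obtain rfl | hpj := eq_or_ne p j
    · simp only [Pi.sub_apply, Pi.single_eq_same, Pi.single_eq_of_ne hjk, sub_zero]
      linarith [h.supply_add_demand_le p]
    obtain rfl | hpk := eq_or_ne p k
    · simp only [Pi.sub_apply, Pi.single_eq_same, Pi.single_eq_of_ne hpj, sub_zero]
      linarith [h.supply_add_demand_le p]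
    simpa [hpj, hpk] using hslack p hpj hpk

lemma Admissible.exists_max_push (h : Admissible a b F) (j k : S) :
    ∃ m, 0 ≤ m ∧ m ≤ a j ∧ m ≤ b k ∧ (∀ i, i ≠ j → i ≠ k → a i + b i ≤ F - m) ∧
      (m = a j ∨ m = b k ∨ ∃ i, i ≠ j ∧ i ≠ k ∧ a i + b i = F - m) := by
  set slacks := (univ.filter fun i => i ≠ j ∧ i ≠ k).image fun i => F - (a i + b i)
  set candidates := insert (a j) (insert (b k) slacks)
  have hne : candidates.Nonempty := insert_nonempty _ _
  have hle : ∀ x ∈ candidates, candidates.min' hne ≤ x := fun x hx => min'_le _ _ hx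
  refine ⟨candidates.min' hne, ?_, hle _ (mem_insert_self _ _),
    hle _ (mem_insert_of_mem (mem_insert_self _ _)), fun i hij hik => ?_, ?_⟩
  · refine (le_min'_iff _ hne).2 fun x hx => ?_
    simp only [candidates, slacks, mem_insert, mem_image, mem_filter, mem_univ, true_and] at hx
    obtain rfl | rfl | ⟨i, -, rfl⟩ := hx
    exacts [h.supply_nonneg j, h.demand_nonneg k, sub_nonneg.2 (h.supply_add_demand_le i)]
  · have := hle _ (mem_insert_of_mem (mem_insert_of_mem
      (mem_image_of_mem (fun i => F - (a i + b i)) (mem_filter.2 ⟨mem_univ i, hij, hik⟩))))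
    linarith
  · have hmem := min'_mem candidates hne
    simp only [candidates, slacks, mem_insert, mem_image, mem_filter, mem_univ, true_and] at hmem
    obtain hm | hm | ⟨i, ⟨hij, hik⟩, hm⟩ := hmem
    · exact .inl hm
    · exact .inr (.inl hm)
    · exact .inr (.inr ⟨i, hij, hik, by linarith⟩)

lemma Admissible.mem (h : Admissible a b F) : (a, b) ∈ transportable := by
  obtain ⟨n, hn⟩ : ∃ n, (support a).ncard + (support b).ncard = n := ⟨_, rfl⟩
  induction n using Nat.strong_induction_on generalizing a b F with | _ n ih => ?_
  by_cases ha : a = 0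
  · subst ha
    have hF : F = 0 := by simpa using h.sum_supply.symm
    obtain rfl : b = 0 := funext fun p =>
      le_antisymm (by simpa [hF] using h.supply_add_demand_le p) (h.demand_nonneg p)
    exact zero_mem transportable
  obtain ⟨j, hj⟩ := Function.ne_iff.1 ha
  obtain ⟨k, hkj, hk⟩ : ∃ k ∈ univ.erase j, b k ≠ 0 := by
    refine exists_ne_zero_of_sum_ne_zero (ne_of_gt ?_)
    rw [sum_erase_eq_sub (mem_univ j), h.sum_demand]
    linarith [h.supply_add_demand_le j, lt_of_le_of_ne (h.supply_nonneg j) hj.symm]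
  have hjk : j ≠ k := (ne_of_mem_erase hkj).symm
  obtain ⟨m, hm, hma, hmb, hslack, hcases⟩ := h.exists_max_push j k
  have hres := h.sub_edge hjk hma hmb hslack
  have hsplit : (a, b) = edge j k m + (a - Pi.single j m, b - Pi.single k m) := by simp [edge]
  rw [hsplit]
  refine add_mem (edge_mem hjk hm) ?_
  rcases hcases with rfl | rfl | ⟨i, hij, hik, hi⟩
  · refine ih _ ?_ hres rfl
    linarith [ncard_support_sub_single_self_lt hj, ncard_support_sub_single_le hk (a j)]
  · refine ih _ ?_ hres rfl
    linarith [ncard_support_sub_single_le hj (b k), ncard_support_sub_single_self_lt hk]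
  · exact hres.mem_of_tight (i := i) (by simpa [hij, hik] using hi)

end OffDiagTransport

/-- Feasibility of a transportation problem with forbidden diagonal: if `a, b ≥ 0` have
equal totals `F` and `a j + b j ≤ F` for all `j`, then there is a nonnegative flow
`f` with zero diagonal whose row sums are `a` and column sums are `b`. -/
theorem transportation_feasibility {S : Type*} [Fintype S] (a b : S → ℝ) (F : ℝ)
    (ha : ∀ j, 0 ≤ a j) (hb : ∀ j, 0 ≤ b j)
    (hA : ∑ j, a j = F) (hB : ∑ j, b j = F)
    (hd : ∀ j, a j + b j ≤ F) :
    ∃ f : S → S → ℝ,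
      (∀ j k, 0 ≤ f j k) ∧
      (∀ j, f j j = 0) ∧
      (∀ j, ∑ k, f j k = a j) ∧
      (∀ k, ∑ j, f j k = b k) := by
  classical
  exact (OffDiagTransport.Admissible.mk ha hb hA hB hd).mem
end

section
/- Let 0 ≤ θ ≤ 1/2 and let ρ be a real number with 1 − θ ≤ ρ < 1. Let S be a finite set and let ρ_j ∈ [0, 1−θ] for each j ∈ S with ∑_{j∈S} ρ_j = ρ. Then ∑_{j∈S} max{ (ρ_j − ρ + θ)^+ / (1 − ρ), (ρ_j − ρ + 1 − θ)^+ / (2 − 2θ − ρ) } ≤ 1, where t^+ denotes max{t, 0}. -/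
/-!
The second branch of each maximum dominates the first, by the mediant inequality
`x / d ≤ (x + e) / (d + e)` for `x ≤ d`, which is exactly the constraint `ρ_j ≤ 1 - θ`.
With `b = 1 - θ` and `c = ρ - b ≥ 0` it remains to show `∑ (ρ_j - c)⁺ ≤ b - c`. If at most one
term is positive, that term is at most `b - c`; if at least two are, dropping the others and
subtracting `c` at least twice gives at most `∑ ρ_j - 2c = b - c`.
-/

open Finset

lemma max_div_le_max_add_div_add {x d e : ℝ} (hd : 0 < d) (he : 0 ≤ e) (hx : x ≤ d) :
    max x 0 / d ≤ max (x + e) 0 / (d + e) := by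
  rcases le_or_gt x 0 with hx0 | hx0
  · rw [max_eq_right hx0, zero_div]
    positivity
  · rw [max_eq_left hx0.le, max_eq_left (by linarith), div_le_div_iff₀ hd (by linarith)]
    nlinarith

lemma sum_max_sub_zero_le {ι : Type*} (s : Finset ι) (x : ι → ℝ) {b c : ℝ}
    (hx0 : ∀ i ∈ s, 0 ≤ x i) (hxb : ∀ i ∈ s, x i ≤ b) (hc : 0 ≤ c) (hcb : c ≤ b)
    (hsum : ∑ i ∈ s, x i ≤ b + c) :
    ∑ i ∈ s, max (x i - c) 0 ≤ b - c := by
  classical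
  set A := s.filter (fun i => 0 < x i - c)
  have hA : ∑ i ∈ s, max (x i - c) 0 = ∑ i ∈ A, (x i - c) := by
    rw [sum_filter]
    refine sum_congr rfl fun i _ => ?_
    split_ifs with h
    · exact max_eq_left h.le
    · exact max_eq_right (not_lt.mp h)
  rw [hA]
  rcases le_or_gt #A 1 with hcard | hcard
  · have hterm : ∀ i ∈ A, x i - c ≤ b - c := fun i hi =>
      sub_le_sub_right (hxb i (mem_filter.mp hi).1) c
    calc ∑ i ∈ A, (x i - c) ≤ #A • (b - c) := sum_le_card_nsmul A _ _ hterm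
      _ ≤ 1 • (b - c) := nsmul_le_nsmul_left (by linarith) hcard
      _ = b - c := one_nsmul _
  · have hsub : ∑ i ∈ A, x i ≤ ∑ i ∈ s, x i :=
      sum_le_sum_of_subset_of_nonneg (filter_subset _ s) fun i hi _ => hx0 i hi
    have hcard' : (2 : ℝ) ≤ #A := by exact_mod_cast hcard
    rw [sum_sub_distrib, sum_const, nsmul_eq_mul]
    nlinarith

theorem sum_bound_general {S : Type*} [Fintype S] (θ ρ : ℝ)
    (hθ1 : θ ≤ 1/2) (hρ1 : 1 - θ ≤ ρ) (hρ2 : ρ < 1)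
    (ρj : S → ℝ) (hρj : ∀ j, ρj j ∈ Set.Icc (0:ℝ) (1 - θ))
    (hsum : ∑ j, ρj j = ρ) :
    ∑ j, max (max (ρj j - ρ + θ) 0 / (1 - ρ))
        (max (ρj j - ρ + 1 - θ) 0 / (2 - 2 * θ - ρ)) ≤ 1 := by
  have hsecond : ∀ j, max (ρj j - ρ + θ) 0 / (1 - ρ)
      ≤ max (ρj j - ρ + 1 - θ) 0 / (2 - 2 * θ - ρ) := fun j => by
    have h := max_div_le_max_add_div_add (x := ρj j - ρ + θ) (e := 1 - 2 * θ)
      (sub_pos.mpr hρ2) (by linarith) (by linarith [(hρj j).2])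
    convert h using 3 <;> ring
  have hpos := sum_max_sub_zero_le univ ρj (b := 1 - θ) (c := ρ - (1 - θ))
    (fun j _ => (hρj j).1) (fun j _ => (hρj j).2) (by linarith) (by linarith) (by linarith)
  calc ∑ j, max (max (ρj j - ρ + θ) 0 / (1 - ρ))
        (max (ρj j - ρ + 1 - θ) 0 / (2 - 2 * θ - ρ))
      = (∑ j, max (ρj j - (ρ - (1 - θ))) 0) / (2 - 2 * θ - ρ) := by
        rw [sum_div]
        refine sum_congr rfl fun j _ => ?_
        rw [max_eq_right (hsecond j)]
        congr 2; ring
    _ ≤ 1 := div_le_one_of_le₀ (by linarith) (by linarith)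

/-- Sum bound in the LP feasibility lemma for Stochastic SWOR: for `0 ≤ θ ≤ 1/2`,
`1-θ ≤ ρ < 1`, and `ρ_j ∈ [0, 1-θ]` with `∑ ρ_j = ρ`:
`∑_j max{ (ρ_j - ρ + θ)⁺/(1-ρ), (ρ_j - ρ + 1 - θ)⁺/(2 - 2θ - ρ) } ≤ 1`. -/
theorem sum_bound {S : Type*} [Fintype S] (θ ρ : ℝ)
    (hθ0 : 0 ≤ θ) (hθ1 : θ ≤ 1/2) (hρ1 : 1 - θ ≤ ρ) (hρ2 : ρ < 1)
    (ρj : S → ℝ) (hρj : ∀ j, ρj j ∈ Set.Icc (0:ℝ) (1 - θ))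
    (hsum : ∑ j, ρj j = ρ) :
    ∑ j, max (max (ρj j - ρ + θ) 0 / (1 - ρ))
        (max (ρj j - ρ + 1 - θ) 0 / (2 - 2 * θ - ρ)) ≤ 1 :=
  sum_bound_general θ ρ hθ1 hρ1 hρ2 ρj hρj hsum
end

section
/- Let 0 < θ ≤ 1/2 and define p : ℝ → ℝ by p(x) = min{x/θ, 1}. Let λ > 0, let ρ be a real number with 1 − θ < ρ < 1, let S be a finite set, and let ρ_j ∈ [0, 1−θ] for each j ∈ S with ∑_{j∈S} ρ_j = ρ. Then there exist nonnegative reals (λ_j)_{j∈S} and (ρ_{jk})_{j,k∈S} such that: ∑_{j∈S} λ_j = λ; for each j ∈ S, ∑_{k∈S} ρ_{jk} = ρ and ρ_{jj} = 1 − θ and ∑_{k∈S} λ_k · ρ_{kj} = λ · ρ_j; and for each j ∈ S, λ_j ≥ λ · max{ (p(ρ) − p(ρ − ρ_j)) / (p(ρ) − p(ρ − 1 + θ)), (ρ_j − ρ + 1 − θ) / (2 − 2θ − ρ) }. -/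
/-!
Write `t = ρ - (1 - θ) > 0` and look for `lamj = lam • w` and `ρjk = (1 - θ) • 1 + t • y` with
`y` row-stochastic with zero diagonal. The column equations then say that `y` carries row masses
`r j = t * w j` onto column masses `c j = ρj j - (1 - θ) * w j`, both of total `t`, and such a
zero-diagonal transport exists as soon as `r j + c j ≤ t` for all `j`, i.e.
`w j ≥ (ρj j - t) / (2 - 2θ - ρ)`. Since `p ρ = 1` for `p = matchRate θ`, the first lower bound
on `w j` never exceeds the second one (this is where `θ ≤ 1/2` enters). The second bounds, cut
off at `0`, sum to at most `1`, while the upper bounds `ρj j / (1 - θ)` forced by `c j ≥ 0` sum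
to more than `1`, so a weight vector summing to `1` fits between them.
-/

open Finset

section

variable {ι 𝕜 : Type*} [Fintype ι] [Field 𝕜] [LinearOrder 𝕜] [IsStrictOrderedRing 𝕜]

omit [LinearOrder 𝕜] [IsStrictOrderedRing 𝕜] in
theorem sum_ite_eq_zero_else [DecidableEq ι] (i : ι) (f : ι → 𝕜) :
    ∑ j, (if i = j then 0 else f j) = ∑ j, f j - f i := by
  rw [sum_ite, sum_const_zero, zero_add, filter_ne, sum_erase_eq_sub (mem_univ i)]

omit [LinearOrder 𝕜] [IsStrictOrderedRing 𝕜] in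
theorem sum_ite_eq_zero_else' [DecidableEq ι] (i : ι) (f : ι → 𝕜) :
    ∑ j, (if j = i then 0 else f j) = ∑ j, f j - f i := by
  simp_rw [eq_comm (b := i), sum_ite_eq_zero_else]

theorem exists_stochastic_offDiag_of_add_lt {T : 𝕜} {r c : ι → 𝕜} (hT : 0 < T)
    (hr : ∀ i, 0 ≤ r i) (hc : ∀ i, 0 ≤ c i) (hrs : ∑ i, r i = T) (hcs : ∑ i, c i = T)
    (hrc : ∀ i, r i + c i < T) :
    ∃ y : ι → ι → 𝕜, (∀ i j, 0 ≤ y i j) ∧ (∀ i, y i i = 0) ∧ (∀ i, ∑ j, y i j = 1) ∧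
      ∀ j, ∑ i, r i * y i j = c j := by
  classical
  -- `(u i, v i)` solves the 2×2 system `hrow`/`hcol`, whose determinant is `T * (T - r i - c i)`.
  set u : ι → 𝕜 := fun i => (T - r i + c i) / (T - r i - c i)
  set v : ι → 𝕜 := fun i => (T + r i - c i) / (T - r i - c i)
  set V := ∑ i, c i * v i
  have hΔ i : 0 < T - r i - c i := by linarith [hrc i]
  have hu i : 0 ≤ u i := div_nonneg (by linarith [hrc i, hc i]) (hΔ i).le
  have hv i : 0 ≤ v i := div_nonneg (by linarith [hrc i, hr i]) (hΔ i).le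
  have hTV : 0 < T + V :=
    add_pos_of_pos_of_nonneg hT (sum_nonneg fun i _ => mul_nonneg (hc i) (hv i))
  have hrow i : (T - c i) * u i - c i * v i = T := by
    simp only [u, v]; field_simp [(hΔ i).ne']; ring
  have hcol i : (T - r i) * v i - r i * u i = T := by
    simp only [u, v]; field_simp [(hΔ i).ne']; ring
  have hUV : ∑ i, r i * u i = V := by
    have h i : r i * u i - c i * v i = r i - c i := by
      simp only [u, v]; field_simp [(hΔ i).ne']; ring
    rw [← sub_eq_zero, ← sum_sub_distrib, sum_congr rfl fun i _ => h i, sum_sub_distrib,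
      hrs, hcs, sub_self]
  refine ⟨fun i j => if i = j then 0 else c j * (u i + v j) / (T + V), fun i j => ?_,
    fun i => by simp, fun i => ?_, fun j => ?_⟩
  · dsimp only
    split_ifs
    · rfl
    · exact div_nonneg (mul_nonneg (hc j) (add_nonneg (hu i) (hv j))) hTV.le
  · rw [sum_ite_eq_zero_else, ← sum_div, ← sub_div, div_eq_one_iff_eq hTV.ne']
    simp only [mul_add, sum_add_distrib, ← sum_mul, hcs]
    linear_combination hrow i
  · have h i : r i * (c j * (u i + v j) / (T + V)) = c j / (T + V) * (r i * u i + r i * v j) := by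
      ring
    simp_rw [mul_ite, mul_zero, sum_ite_eq_zero_else', h, ← mul_sum, sum_add_distrib, ← sum_mul,
      hUV, hrs]
    field_simp [hTV.ne']
    linear_combination c j * hcol j

theorem exists_stochastic_offDiag_of_star {T : 𝕜} {r c z : ι → 𝕜} (k : ι)
    (hrs : ∑ i, r i = T) (hrck : r k + c k = T) (hz : ∀ j, 0 ≤ z j) (hzk : z k = 0)
    (hzs : ∑ j, z j = 1) (hrz : ∀ j ≠ k, r k * z j = c j) :
    ∃ y : ι → ι → 𝕜, (∀ i j, 0 ≤ y i j) ∧ (∀ i, y i i = 0) ∧ (∀ i, ∑ j, y i j = 1) ∧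
      ∀ j, ∑ i, r i * y i j = c j := by
  classical
  refine ⟨fun i j => if i = k then z j else if j = k then 1 else 0, fun i j => ?_, fun i => ?_,
    fun i => ?_, fun j => ?_⟩ <;> dsimp only
  · split_ifs
    exacts [hz j, zero_le_one, le_rfl]
  · split_ifs with h
    · rwa [h]
    · rfl
  · split_ifs
    · exact hzs
    · simp
  · by_cases hj : j = k
    · subst hj
      simp_rw [hzk, if_true, mul_ite, mul_zero, mul_one, sum_ite_eq_zero_else', hrs]
      linear_combination -hrck
    · simp [hj, hrz j hj]

theorem exists_stochastic_offDiag {T : 𝕜} {r c : ι → 𝕜} (hT : 0 < T) (hr : ∀ i, 0 ≤ r i)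
    (hc : ∀ i, 0 ≤ c i) (hrs : ∑ i, r i = T) (hcs : ∑ i, c i = T) (hrc : ∀ i, r i + c i ≤ T) :
    ∃ y : ι → ι → 𝕜, (∀ i j, 0 ≤ y i j) ∧ (∀ i, y i i = 0) ∧ (∀ i, ∑ j, y i j = 1) ∧
      ∀ j, ∑ i, r i * y i j = c j := by
  classical
  by_cases htight : ∃ k, r k + c k = T
  -- then all the mass sits in row `k` and column `k`
  · obtain ⟨k, hk⟩ := htight
    rcases (hr k).eq_or_lt with hrk | hrk
    -- `c` is concentrated on `k`, so row `k` of `y` is unconstrained off the diagonal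
    · have hc0 : ∀ j ≠ k, c j = 0 := by
        have : ∑ j ∈ univ.erase k, c j = 0 := by
          rw [sum_erase_eq_sub (mem_univ k), hcs]; linarith
        exact fun j hj => (sum_eq_zero_iff_of_nonneg fun i _ => hc i).mp this j
          (mem_erase.mpr ⟨hj, mem_univ j⟩)
      refine exists_stochastic_offDiag_of_star (z := fun j => if j = k then 0 else r j / T) k hrs hk
        (fun j => ?_) (if_pos rfl) ?_ fun j hj => by rw [← hrk, zero_mul, hc0 j hj]
      · split_ifs
        exacts [le_rfl, div_nonneg (hr j) hT.le]
      · rw [sum_ite_eq_zero_else', ← sum_div, hrs, ← hrk, zero_div, sub_zero, div_self hT.ne']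
    · refine exists_stochastic_offDiag_of_star (z := fun j => if j = k then 0 else c j / r k) k hrs
        hk (fun j => ?_) (if_pos rfl) ?_ fun j hj => by simp [hj, mul_div_cancel₀ _ hrk.ne']
      · split_ifs
        exacts [le_rfl, div_nonneg (hc j) hrk.le]
      · rw [sum_ite_eq_zero_else', ← sum_div, hcs, ← sub_div, div_eq_one_iff_eq hrk.ne']
        linarith
  · push Not at htight
    exact exists_stochastic_offDiag_of_add_lt hT hr hc hrs hcs fun i => (hrc i).lt_of_ne (htight i)

theorem exists_rates_of_weights {a ρ : 𝕜} {ρj w : ι → 𝕜} (ha : 0 ≤ a) (haρ : a < ρ)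
    (hsum : ∑ j, ρj j = ρ) (hw0 : ∀ j, 0 ≤ w j) (hw : ∑ j, w j = 1) (hwρ : ∀ j, w j * a ≤ ρj j)
    (hρw : ∀ j, ρj j - (ρ - a) ≤ w j * (2 * a - ρ)) :
    ∃ ρjk : ι → ι → 𝕜, (∀ j k, 0 ≤ ρjk j k) ∧ (∀ j, ∑ k, ρjk j k = ρ) ∧ (∀ j, ρjk j j = a) ∧
      ∀ j, ∑ k, w k * ρjk k j = ρj j := by
  classical
  have ht : 0 < ρ - a := sub_pos.2 haρ
  obtain ⟨y, hy0, hydiag, hyrow, hycol⟩ := exists_stochastic_offDiag (T := ρ - a)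
    (r := fun j => w j * (ρ - a)) (c := fun j => ρj j - w j * a) ht
    (fun j => mul_nonneg (hw0 j) ht.le) (fun j => sub_nonneg.2 (hwρ j))
    (by rw [← sum_mul, hw, one_mul]) (by rw [sum_sub_distrib, hsum, ← sum_mul, hw, one_mul])
    (fun j => by linarith [hρw j])
  refine ⟨fun j k => (if j = k then a else 0) + (ρ - a) * y j k, fun j k => ?_, fun j => ?_,
    fun j => by simp [hydiag], fun j => ?_⟩
  · exact add_nonneg (by split_ifs <;> simp [ha]) (mul_nonneg ht.le (hy0 j k))
  · rw [sum_add_distrib, sum_ite_eq, if_pos (mem_univ j), ← mul_sum, hyrow, mul_one]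
    ring
  · have := hycol j
    simp only [mul_add, sum_add_distrib, mul_ite, mul_zero, sum_ite_eq', if_pos (mem_univ j)]
    simp only [← mul_assoc] at this ⊢
    rw [this]
    ring

theorem exists_le_le_sum_eq {m b : ι → 𝕜} {s : 𝕜} (hmb : ∀ j, m j ≤ b j) (hm : ∑ j, m j ≤ s)
    (hb : s ≤ ∑ j, b j) : ∃ w : ι → 𝕜, (∀ j, m j ≤ w j ∧ w j ≤ b j) ∧ ∑ j, w j = s := by
  set κ := (s - ∑ j, m j) / (∑ j, b j - ∑ j, m j)
  have hκ0 : 0 ≤ κ := div_nonneg (sub_nonneg.2 hm) (sub_nonneg.2 (hm.trans hb))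
  have hκ1 : κ ≤ 1 := div_le_one_of_le₀ (by linarith) (sub_nonneg.2 (hm.trans hb))
  refine ⟨fun j => m j + κ * (b j - m j), fun j => ⟨?_, ?_⟩, ?_⟩
  · exact le_add_of_nonneg_right (mul_nonneg hκ0 (sub_nonneg.2 (hmb j)))
  · linarith [mul_le_mul_of_nonneg_right hκ1 (sub_nonneg.2 (hmb j))]
  · rw [sum_add_distrib, ← mul_sum, sum_sub_distrib, div_mul_cancel_of_imp fun h => by linarith]
    ring

theorem sum_max_zero_sub_le {x : ι → 𝕜} {t d : 𝕜} (ht : 0 ≤ t) (hd : 0 ≤ d)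
    (hx : ∀ j, 0 ≤ x j) (hxd : ∀ j, x j ≤ t + d) (hsum : ∑ j, x j ≤ 2 * t + d) :
    ∑ j, max 0 (x j - t) ≤ d := by
  classical
  set A := univ.filter fun j => t < x j
  have hA : ∑ j, max 0 (x j - t) = ∑ j ∈ A, (x j - t) := by
    rw [sum_filter]
    refine sum_congr rfl fun j _ => ?_
    split_ifs with h
    · exact max_eq_right (by linarith)
    · exact max_eq_left (by linarith)
  rw [hA]
  rcases le_or_gt #A 1 with h | h
  · calc ∑ j ∈ A, (x j - t) ≤ #A • d := sum_le_card_nsmul _ _ _ fun j _ => by linarith [hxd j]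
      _ ≤ 1 • d := nsmul_le_nsmul_left hd h
      _ = d := one_nsmul d
  · calc ∑ j ∈ A, (x j - t) = ∑ j ∈ A, x j - #A * t := by
          rw [sum_sub_distrib, sum_const, nsmul_eq_mul]
      _ ≤ ∑ j, x j - 2 * t := by
          refine sub_le_sub (sum_le_univ_sum_of_nonneg fun j => hx j) ?_
          exact mul_le_mul_of_nonneg_right (by exact_mod_cast h) ht
      _ ≤ d := by linarith

end

noncomputable def matchRate (θ x : ℝ) : ℝ := min (x / θ) 1

noncomputable def minShare (θ ρ x : ℝ) : ℝ := max 0 ((x - ρ + 1 - θ) / (2 - 2 * θ - ρ))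

theorem matchRate_of_le {θ x : ℝ} (hθ : 0 < θ) (h : θ ≤ x) : matchRate θ x = 1 :=
  min_eq_right ((one_le_div hθ).2 h)

theorem matchRate_of_ge {θ x : ℝ} (hθ : 0 < θ) (h : x ≤ θ) : matchRate θ x = x / θ :=
  min_eq_left ((div_le_one hθ).2 h)

theorem matchRate_gap_ratio_le_minShare {θ ρ x : ℝ} (hθ : 0 < θ) (hθ2 : θ ≤ 1 / 2)
    (hρ1 : 1 - θ < ρ) (hρ2 : ρ < 1) (hx : x ≤ 1 - θ) :
    (matchRate θ ρ - matchRate θ (ρ - x)) / (matchRate θ ρ - matchRate θ (ρ - 1 + θ)) ≤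
      minShare θ ρ x := by
  rw [matchRate_of_le (x := ρ) hθ (by linarith), matchRate_of_ge (x := ρ - 1 + θ) hθ (by linarith)]
  rcases le_or_gt θ (ρ - x) with h | h
  · rw [matchRate_of_le hθ h, sub_self, zero_div]
    exact le_max_left _ _
  · rw [matchRate_of_ge hθ h.le]
    calc (1 - (ρ - x) / θ) / (1 - (ρ - 1 + θ) / θ) = (x - ρ + θ) / (1 - ρ) := by
          field_simp
          ring
      _ ≤ (x - ρ + 1 - θ) / (2 - 2 * θ - ρ) := by
          rw [div_le_div_iff₀ (by linarith) (by linarith)]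
          nlinarith [mul_nonneg (by linarith : 0 ≤ 1 - 2 * θ) (by linarith : 0 ≤ 1 - θ - x)]
      _ ≤ minShare θ ρ x := le_max_right _ _

theorem minShare_le_div {θ ρ x : ℝ} (hρ1 : 1 - θ < ρ) (hD : 0 < 2 - 2 * θ - ρ) (hx0 : 0 ≤ x)
    (hx : x ≤ 1 - θ) : minShare θ ρ x ≤ x / (1 - θ) := by
  have h1θ : 0 < 1 - θ := by linarith
  refine max_le (div_nonneg hx0 h1θ.le) ?_
  rw [div_le_div_iff₀ hD h1θ]
  nlinarith [mul_nonneg (by linarith : 0 ≤ ρ - 1 + θ) (by linarith : 0 ≤ 1 - θ - x)]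

theorem sum_minShare_le_one {ι : Type*} [Fintype ι] {θ ρ : ℝ} {ρj : ι → ℝ} (hρ1 : 1 - θ < ρ)
    (hD : 0 < 2 - 2 * θ - ρ) (hρj : ∀ j, ρj j ∈ Set.Icc 0 (1 - θ)) (hsum : ∑ j, ρj j = ρ) :
    ∑ j, minShare θ ρ (ρj j) ≤ 1 := by
  have h j : minShare θ ρ (ρj j) = max 0 (ρj j - (ρ - 1 + θ)) / (2 - 2 * θ - ρ) := by
    rw [minShare, ← max_div_div_right hD.le, zero_div,
      show ρj j - ρ + 1 - θ = ρj j - (ρ - 1 + θ) by ring]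
  rw [sum_congr rfl fun j _ => h j, ← sum_div, div_le_one hD]
  exact sum_max_zero_sub_le (by linarith) hD.le (fun j => (hρj j).1)
    (fun j => by linarith [(hρj j).2]) (by linarith)

/-- LP feasibility lemma for the reduction in the analysis of Stochastic SWOR, with the
match-rate function `p(x) = min(x/θ, 1)`. -/
theorem lp_feasibility {S : Type*} [Fintype S] (θ lam ρ : ℝ)
    (hθ0 : 0 < θ) (hθ1 : θ ≤ 1/2) (hlam : 0 < lam)
    (hρ1 : 1 - θ < ρ) (hρ2 : ρ < 1)
    (ρj : S → ℝ) (hρj : ∀ j, ρj j ∈ Set.Icc (0:ℝ) (1 - θ))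
    (hsum : ∑ j, ρj j = ρ) :
    ∃ (lamj : S → ℝ) (ρjk : S → S → ℝ),
      (∀ j, 0 ≤ lamj j) ∧
      (∀ j k, 0 ≤ ρjk j k) ∧
      (∑ j, lamj j = lam) ∧
      (∀ j, ∑ k, ρjk j k = ρ) ∧
      (∀ j, ρjk j j = 1 - θ) ∧
      (∀ j, ∑ k, lamj k * ρjk k j = lam * ρj j) ∧
      (∀ j, lam * max
          ((min (ρ / θ) 1 - min ((ρ - ρj j) / θ) 1) /
            (min (ρ / θ) 1 - min ((ρ - 1 + θ) / θ) 1))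
          ((ρj j - ρ + 1 - θ) / (2 - 2 * θ - ρ)) ≤ lamj j) := by
  have hD : 0 < 2 - 2 * θ - ρ := by linarith
  have h1θ : 0 < 1 - θ := by linarith
  obtain ⟨w, hw, hw_sum⟩ := exists_le_le_sum_eq (m := fun j => minShare θ ρ (ρj j))
    (b := fun j => ρj j / (1 - θ)) (s := 1) (fun j => minShare_le_div hρ1 hD (hρj j).1 (hρj j).2)
    (sum_minShare_le_one hρ1 hD hρj hsum)
    (by rw [← sum_div, hsum, le_div_iff₀ h1θ, one_mul]; exact hρ1.le)
  have hw0 j : 0 ≤ w j := (le_max_left _ _).trans (hw j).1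
  obtain ⟨ρjk, hρjk0, hrow, hdiag, hcol⟩ := exists_rates_of_weights h1θ.le hρ1 hsum hw0 hw_sum
    (fun j => (le_div_iff₀ h1θ).1 (hw j).2) fun j => by
      have hmw := (le_max_right _ _).trans (hw j).1
      rw [div_le_iff₀ hD] at hmw
      linarith
  refine ⟨fun j => lam * w j, ρjk, fun j => mul_nonneg hlam.le (hw0 j), hρjk0,
    by rw [← mul_sum, hw_sum, mul_one], hrow, hdiag, fun j => ?_, fun j => ?_⟩
  · simp_rw [mul_assoc, ← mul_sum, hcol]
  · exact mul_le_mul_of_nonneg_left (max_le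
      ((matchRate_gap_ratio_le_minShare hθ0 hθ1 hρ1 hρ2 (hρj j).2).trans (hw j).1)
      ((le_max_right _ _).trans (hw j).1)) hlam.le
end
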